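/- arXiv:1907.11036 — 9 statements merged into one kernel-verified Lean document; each statement's English description precedes it below -/
import Mathlib

section
/- On the complete graph with N ≥ 2 vertices, with Laplacian Δf(x) = (1/(N-1)) Σ_{y≠x} (f(y)-f(x)) and the discrete metric d(x,y)=1_{x≠y}, the Ricci curvature at every pair (x,y) with x≠y equals N/(N-1); that is, for all t ≥ 0 and x≠y, ‖P_t(x,·)-P_t(y,·)‖_{TV} ≤ e^{-Nt/(N-1)}, and N/(N-1) is the largest constant for which this holds. -/
/-!
The Laplacian of the complete graph is `-λ H` with `λ = N/(N-1)` and `H = 1 - J/N` the centering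
projection, so `P_t = 1 + (e^{-λt} - 1) H` and the row `P_t(x,·)` is `e^{-λt} δ_x` plus the uniform
mass `(1 - e^{-λt})/N`. Two rows therefore differ only by the mass `e^{-λt}` sitting at `x` rather
than at `y`. For the discrete metric, leaving the common part in place and moving that mass costs
`e^{-λt}`, while any coupling of `p` and `q` moves at least `p x - q x` off the point `x`. Hence
`W₁(P_t(x,·), P_t(y,·)) = e^{-λt}` exactly, which gives both the bound and its optimality.
-/

/-- A coupling of two nonnegative measures (densities) with prescribed marginals. -/
def IsCoupling {S : Type*} (p q : S → ℝ) (π : S × S → ℝ) : Prop :=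
  (∀ z, 0 ≤ π z) ∧ Summable π ∧ (∀ x, ∑' y, π (x, y) = p x) ∧ (∀ y, ∑' x, π (x, y) = q y)

/-- Optimal transport cost. -/
noncomputable def Tcost {S : Type*} (c : S → S → ℝ) (p q : S → ℝ) : ℝ :=
  sInf {r : ℝ | ∃ π, IsCoupling p q π ∧ r = ∑' z : S × S, c z.1 z.2 * π z}

open Finset

open Nat in
theorem IsIdempotentElem.exp_smul {A : Type*} [Ring A] [Algebra ℝ A] [TopologicalSpace A]
    [IsTopologicalRing A] [ContinuousSMul ℝ A] [T2Space A] {P : A} (hP : IsIdempotentElem P)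
    (c : ℝ) : NormedSpace.exp (c • P) = 1 + (Real.exp c - 1) • P := by
  have hterm : ∀ n, (n !⁻¹ : ℝ) • (c • P) ^ n =
      ((n !⁻¹ : ℝ) • c ^ n) • P + if n = 0 then 1 - P else 0 := by
    rintro (_ | n)
    · simp
    · simp [smul_pow, hP.pow_succ_eq, smul_smul, mul_comm]
  have hsum : HasSum (fun n => (n !⁻¹ : ℝ) • (c • P) ^ n) (Real.exp c • P + (1 - P)) := by
    simp only [hterm]
    refine HasSum.add ?_ (hasSum_ite_eq 0 _)
    rw [Real.exp_eq_exp_ℝ]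
    exact (NormedSpace.exp_series_hasSum_exp' c).smul_const P
  rw [NormedSpace.exp_eq_tsum ℝ]
  beta_reduce
  rw [hsum.tsum_eq, sub_smul, one_smul]
  abel

theorem Tcost_le_of_isCoupling {S : Type*} {c : S → S → ℝ} (hc : ∀ a b, 0 ≤ c a b)
    {p q : S → ℝ} {π : S × S → ℝ} (hπ : IsCoupling p q π) :
    Tcost c p q ≤ ∑' z : S × S, c z.1 z.2 * π z :=
  csInf_le ⟨0, by rintro r ⟨π', hπ', rfl⟩; exact tsum_nonneg fun z => mul_nonneg (hc _ _) (hπ'.1 z)⟩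
    ⟨π, hπ, rfl⟩

section Discrete

variable {S : Type*} [Fintype S] [DecidableEq S]

theorem sub_le_Tcost_discrete {p q : S → ℝ} {π : S × S → ℝ} (hπ : IsCoupling p q π) (x : S) :
    p x - q x ≤ Tcost (fun a b => if a = b then 0 else 1) p q := by
  refine le_csInf ⟨_, π, hπ, rfl⟩ ?_
  rintro r ⟨π', ⟨hπ'0, -, hrow, hcol⟩, rfl⟩
  have hdiag : π' (x, x) ≤ q x := by
    rw [← hcol x, tsum_fintype]
    exact single_le_sum (fun a _ => hπ'0 (a, x)) (mem_univ x)
  have hrow_x : p x - π' (x, x) = ∑ b, (if x = b then 0 else 1) * π' (x, b) := by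
    have hterm : ∀ b, (if x = b then 0 else 1) * π' (x, b) =
        π' (x, b) - if x = b then π' (x, b) else 0 := by
      intro b; split_ifs <;> simp
    rw [← hrow x, tsum_fintype, sum_congr rfl fun b _ => hterm b, sum_sub_distrib, sum_ite_eq,
      if_pos (mem_univ x)]
  calc p x - q x ≤ p x - π' (x, x) := by linarith
    _ = ∑ b, (if x = b then 0 else 1) * π' (x, b) := hrow_x
    _ ≤ ∑ a, ∑ b, (if a = b then (0 : ℝ) else 1) * π' (a, b) :=
        single_le_sum (f := fun a => ∑ b, (if a = b then (0 : ℝ) else 1) * π' (a, b))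
          (fun a _ => sum_nonneg fun b _ => mul_nonneg (by positivity) (hπ'0 _)) (mem_univ x)
    _ = _ := by rw [tsum_fintype, Fintype.sum_prod_type]

theorem isCoupling_single_add {x y : S} {E : ℝ} (hE : 0 ≤ E) {μ : S → ℝ} (hμ : 0 ≤ μ) :
    IsCoupling (Pi.single x E + μ) (Pi.single y E + μ)
      (Pi.single (x, y) E + fun z => if z.1 = z.2 then μ z.1 else 0) := by
  refine ⟨fun z => add_nonneg ?_ ?_, (hasSum_fintype _).summable, fun a => ?_, fun b => ?_⟩
  · exact (Pi.single_nonneg (α := fun _ => ℝ)).2 hE _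
  · dsimp only
    split_ifs
    exacts [hμ _, le_rfl]
  · simp [tsum_fintype, sum_add_distrib, Pi.single_apply, Prod.ext_iff, ite_and]
  · simp [tsum_fintype, sum_add_distrib, Pi.single_apply, Prod.ext_iff, ite_and, eq_comm]

theorem Tcost_discrete_single_add {x y : S} (hxy : x ≠ y) {E : ℝ} (hE : 0 ≤ E) {μ : S → ℝ}
    (hμ : 0 ≤ μ) :
    Tcost (fun a b => if a = b then 0 else 1) (Pi.single x E + μ) (Pi.single y E + μ) = E := by
  set π : S × S → ℝ := Pi.single (x, y) E + fun z => if z.1 = z.2 then μ z.1 else 0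
  have hπ : IsCoupling (Pi.single x E + μ) (Pi.single y E + μ) π := isCoupling_single_add hE hμ
  have hcost : ∀ z : S × S,
      (if z.1 = z.2 then 0 else 1) * π z = Pi.single (M := fun _ => ℝ) (x, y) E z := by
    rintro ⟨a, b⟩
    rcases eq_or_ne a b with rfl | hab
    · rw [if_pos rfl, zero_mul, Pi.single_eq_of_ne]
      rintro ⟨⟩
      exact hxy rfl
    · simp [π, hab]
  refine le_antisymm ((Tcost_le_of_isCoupling (fun a b => by positivity) hπ).trans_eq ?_) ?_
  · rw [tsum_congr hcost, tsum_pi_single]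
  · simpa [hxy] using sub_le_Tcost_discrete hπ x

end Discrete

namespace CompleteGraph

noncomputable def centeringMatrix (S : Type*) [Fintype S] [DecidableEq S] : Matrix S S ℝ :=
  1 - (Fintype.card S : ℝ)⁻¹ • Matrix.of fun _ _ => 1

noncomputable def laplacian (S : Type*) [Fintype S] [DecidableEq S] : Matrix S S ℝ :=
  fun x y => if y = x then -1 else 1 / ((Fintype.card S : ℝ) - 1)

variable {S : Type*} [Fintype S] [DecidableEq S]

theorem centeringMatrix_apply (a b : S) :
    centeringMatrix S a b = (if a = b then 1 else 0) - (Fintype.card S : ℝ)⁻¹ := by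
  simp [centeringMatrix, Matrix.one_apply]

theorem isIdempotentElem_centeringMatrix : IsIdempotentElem (centeringMatrix S) := by
  ext a b
  have hN : (Fintype.card S : ℝ) * ((Fintype.card S : ℝ)⁻¹ * (Fintype.card S : ℝ)⁻¹)
      = (Fintype.card S : ℝ)⁻¹ := by
    rcases eq_or_ne (Fintype.card S : ℝ) 0 with h | h
    · simp [h]
    · field_simp
  simp only [Matrix.mul_apply, centeringMatrix_apply, sub_mul, mul_sub, ite_mul, mul_ite,
    one_mul, mul_one, zero_mul, mul_zero, sum_sub_distrib, sum_ite_eq, sum_ite_eq', mem_univ,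
    if_true, sum_const, card_univ, nsmul_eq_mul, hN]
  ring

theorem laplacian_eq (hS : 1 < Fintype.card S) :
    laplacian S =
      -((Fintype.card S : ℝ) / (Fintype.card S - 1)) • centeringMatrix S := by
  have hN : (1 : ℝ) < Fintype.card S := by exact_mod_cast hS
  have hN0 : (Fintype.card S : ℝ) ≠ 0 := by positivity
  have hN1 : (Fintype.card S : ℝ) - 1 ≠ 0 := by linarith
  ext a b
  simp only [laplacian, Matrix.smul_apply, centeringMatrix_apply, smul_eq_mul]
  rcases eq_or_ne b a with rfl | h
  · simp only [↓reduceIte]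
    field_simp
  · simp only [h, Ne.symm h, ↓reduceIte]
    field_simp
    ring

theorem exp_smul_laplacian_apply (hS : 1 < Fintype.card S) (t : ℝ) (x : S) :
    NormedSpace.exp (t • laplacian S) x =
      Pi.single x (Real.exp (-((Fintype.card S : ℝ) / (Fintype.card S - 1)) * t)) +
        Function.const S
          ((1 - Real.exp (-((Fintype.card S : ℝ) / (Fintype.card S - 1)) * t)) /
            Fintype.card S) := by
  have hN0 : (Fintype.card S : ℝ) ≠ 0 := by positivity
  rw [laplacian_eq hS, smul_smul, mul_comm, isIdempotentElem_centeringMatrix.exp_smul]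
  ext b
  simp only [Matrix.add_apply, Matrix.one_apply, Matrix.smul_apply, centeringMatrix_apply,
    Pi.add_apply, Pi.single_apply, Function.const_apply, smul_eq_mul]
  rcases eq_or_ne b x with rfl | h
  · simp only [↓reduceIte]
    field_simp
    ring
  · simp only [h, Ne.symm h, ↓reduceIte]
    field_simp
    ring

theorem Tcost_discrete_exp_smul_laplacian (hS : 1 < Fintype.card S) {t : ℝ}
    (ht : 0 ≤ t) {x y : S} (hxy : x ≠ y) :
    Tcost (fun a b => if a = b then 0 else 1)
        (NormedSpace.exp (t • laplacian S) x)
        (NormedSpace.exp (t • laplacian S) y) =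
      Real.exp (-((Fintype.card S : ℝ) / (Fintype.card S - 1)) * t) := by
  have hN : (1 : ℝ) < Fintype.card S := by exact_mod_cast hS
  have hE : Real.exp (-((Fintype.card S : ℝ) / (Fintype.card S - 1)) * t) ≤ 1 := by
    rw [Real.exp_le_one_iff, neg_mul, neg_nonpos]
    exact mul_nonneg (div_nonneg (by linarith) (by linarith)) ht
  rw [exp_smul_laplacian_apply hS, exp_smul_laplacian_apply hS]
  exact Tcost_discrete_single_add hxy (Real.exp_pos _).le
    fun _ => div_nonneg (sub_nonneg.mpr hE) (by linarith)

end CompleteGraph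

/-- On the complete graph with `N ≥ 2` vertices, with Laplacian
`Δ f (x) = (1/(N-1)) ∑_{y ≠ x} (f y - f x)` and the discrete metric,
one has `‖P_t(x,·) - P_t(y,·)‖_TV ≤ exp (-N t/(N-1))` for all `t ≥ 0` and `x ≠ y`
(total variation = W₁ for the discrete metric), and `N/(N-1)` is the largest
constant for which this exponential bound holds. -/
theorem stmt1 {S : Type*} [Fintype S] [DecidableEq S] (hS : 2 ≤ Fintype.card S) :
    let N : ℝ := Fintype.card S
    let Δ : Matrix S S ℝ := fun x y => if y = x then -1 else 1 / (N - 1)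
    let d : S → S → ℝ := fun x y => if x = y then 0 else 1
    (∀ t : ℝ, 0 ≤ t → ∀ x y : S, x ≠ y →
        Tcost d (NormedSpace.exp (t • Δ) x) (NormedSpace.exp (t • Δ) y) ≤
          Real.exp (-(N / (N - 1)) * t)) ∧
    ∀ κ : ℝ,
      (∀ t : ℝ, 0 ≤ t → ∀ x y : S, x ≠ y →
        Tcost d (NormedSpace.exp (t • Δ) x) (NormedSpace.exp (t • Δ) y) ≤
          Real.exp (-κ * t)) →
      κ ≤ N / (N - 1) := by
  intro N Δ d
  have hW : ∀ t : ℝ, 0 ≤ t → ∀ x y : S, x ≠ y →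
      Tcost d (NormedSpace.exp (t • Δ) x) (NormedSpace.exp (t • Δ) y) =
        Real.exp (-(N / (N - 1)) * t) :=
    fun t ht x y hxy => CompleteGraph.Tcost_discrete_exp_smul_laplacian hS ht hxy
  refine ⟨fun t ht x y hxy => (hW t ht x y hxy).le, fun κ hκ => ?_⟩
  obtain ⟨x, y, hxy⟩ := Fintype.exists_pair_of_one_lt_card hS
  have h := hκ 1 zero_le_one x y hxy
  rw [hW 1 zero_le_one x y hxy, Real.exp_le_exp] at h
  linarith
end

section
/- Let L be a birth-death generator on S = ℕ ∩ [0,D] given by Lf(n) = b_n(f(n+1)-f(n)) + a_n(f(n-1)-f(n)) with a_0 = 0 (and b_D = 0 if D finite). If there is κ ∈ ℝ with (a_{n+1}-a_n) - (b_{n+1}-b_n) ≥ κ for all n ∈ [0,D-1]∩ℕ, then there exists a coupling generator L^π of L on S² (a Markov generator whose jump kernel has marginals equal to the jump kernel of L in each coordinate, and which keeps the diagonal absorbing) such that L^π d(m,n) ≤ -κ·d(m,n) for all m,n, where d(m,n) = |m-n|. -/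
def pmBD (t : ℕ × ℕ) (v : ℝ) : ℕ × ℕ → ℝ := fun w => if w = t then v else 0

lemma pmBD_nonneg {t : ℕ × ℕ} {v : ℝ} (hv : 0 ≤ v) (w : ℕ × ℕ) : 0 ≤ pmBD t v w := by
  unfold pmBD; split <;> simp [hv]

lemma hasSum_pmBD_mul (t : ℕ × ℕ) (v : ℝ) (f : ℕ × ℕ → ℝ) :
    HasSum (fun w => pmBD t v w * f w) (v * f t) := by
  have e : (fun w => pmBD t v w * f w) = fun w => if w = t then v * f t else 0 := by
    funext w; by_cases h : w = t <;> simp [pmBD, h]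
  rw [e]; exact hasSum_ite_eq t _

lemma hasSum_pmBD_fst (t1 t2 : ℕ) (v : ℝ) (x' : ℕ) :
    HasSum (fun y' => pmBD (t1, t2) v (x', y')) (if x' = t1 then v else 0) := by
  by_cases h : x' = t1
  · subst h
    have e : (fun y' => pmBD (x', t2) v (x', y')) = fun y' => if y' = t2 then v else 0 := by
      funext y'; simp [pmBD, Prod.ext_iff]
    rw [e, if_pos rfl]; exact hasSum_ite_eq t2 v
  · have e : (fun y' => pmBD (t1, t2) v (x', y')) = fun _ => (0:ℝ) := by
      funext y'; simp [pmBD, Prod.ext_iff, h]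
    rw [e, if_neg h]; exact hasSum_zero

lemma hasSum_pmBD_snd (t1 t2 : ℕ) (v : ℝ) (y' : ℕ) :
    HasSum (fun x' => pmBD (t1, t2) v (x', y')) (if y' = t2 then v else 0) := by
  by_cases h : y' = t2
  · subst h
    have e : (fun x' => pmBD (t1, y') v (x', y')) = fun x' => if x' = t1 then v else 0 := by
      funext x'; simp [pmBD, Prod.ext_iff]
    rw [e, if_pos rfl]; exact hasSum_ite_eq t1 v
  · have e : (fun x' => pmBD (t1, t2) v (x', y')) = fun _ => (0:ℝ) := by
      funext x'; simp [pmBD, Prod.ext_iff, h]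
    rw [e, if_neg h]; exact hasSum_zero

def JpiBD (a b : ℕ → ℝ) : ℕ × ℕ → ℕ × ℕ → ℝ := fun p w =>
  if p.1 = p.2 then
    pmBD (p.1 + 1, p.2 + 1) (b p.1) w + pmBD (p.1 - 1, p.2 - 1) (a p.1) w
  else
    pmBD (p.1 + 1, p.2) (b p.1) w + pmBD (p.1 - 1, p.2) (a p.1) w +
      pmBD (p.1, p.2 + 1) (b p.2) w + pmBD (p.1, p.2 - 1) (a p.2) w

lemma teleBD (a b : ℕ → ℝ) (κ : ℝ)
    (hκ : ∀ n, κ ≤ (a (n + 1) - a n) - (b (n + 1) - b n)) :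
    ∀ n m : ℕ, n ≤ m → κ * ((m : ℝ) - n) ≤ (a m - a n) - (b m - b n) := by
  intro n m h
  induction m, h using Nat.le_induction with
  | base => simp
  | succ m hm ih =>
    have h1 := hκ m
    push_cast
    push_cast at ih
    nlinarith [ih, h1]

/-- A coupling jump-rate kernel of a single jump kernel `J`: its marginals agree
with `J` in each coordinate, and the diagonal is absorbing. -/
def IsCouplingKernel {S : Type*} (J : S → S → ℝ) (Jπ : S × S → S × S → ℝ) : Prop :=
  (∀ z w, 0 ≤ Jπ z w) ∧
  (∀ x y x', x' ≠ x → ∑' y', Jπ (x, y) (x', y') = J x x') ∧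
  (∀ x y y', y' ≠ y → ∑' x', Jπ (x, y) (x', y') = J y y') ∧
  (∀ x w, w.1 ≠ w.2 → Jπ (x, x) w = 0)

/-- For a birth-death generator on `ℕ` with death rates `a` (with `a 0 = 0`) and
birth rates `b`, if `(a_{n+1} - a_n) - (b_{n+1} - b_n) ≥ κ` for all `n`, then there
is a coupling generator `L^π` of `L` such that `L^π d (m,n) ≤ -κ d (m,n)` for the
Euclidean metric `d(m,n) = |m - n|`. -/
theorem stmt2 (a b : ℕ → ℝ) (ha0 : a 0 = 0)
    (hapos : ∀ n, 0 < a (n + 1)) (hbpos : ∀ n, 0 < b n)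
    (κ : ℝ) (hκ : ∀ n, κ ≤ (a (n + 1) - a n) - (b (n + 1) - b n)) :
    let J : ℕ → ℕ → ℝ := fun n m => if m = n + 1 then b n else if n = m + 1 then a n else 0
    let d : ℕ → ℕ → ℝ := fun m n => |(m : ℝ) - n|
    ∃ Jπ : ℕ × ℕ → ℕ × ℕ → ℝ, IsCouplingKernel J Jπ ∧
      ∀ m n : ℕ, ∑' w : ℕ × ℕ, Jπ (m, n) w * (d w.1 w.2 - d m n) ≤ -κ * d m n := by
  intro J d
  have ha : ∀ n, 0 ≤ a n := by
    intro n; cases n with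
    | zero => simp [ha0]
    | succ k => exact (hapos k).le
  have hb : ∀ n, 0 ≤ b n := fun n => (hbpos n).le
  have hd : ∀ x y : ℕ, d x y = |(x:ℝ) - y| := fun _ _ => rfl
  refine ⟨JpiBD a b, ⟨?_, ?_, ?_, ?_⟩, ?_⟩
  · -- nonneg
    intro z w
    unfold JpiBD
    split
    · exact add_nonneg (pmBD_nonneg (hb _) w) (pmBD_nonneg (ha _) w)
    · exact add_nonneg (add_nonneg (add_nonneg (pmBD_nonneg (hb _) w)
        (pmBD_nonneg (ha _) w)) (pmBD_nonneg (hb _) w)) (pmBD_nonneg (ha _) w)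
  · -- first marginal
    intro x y x' hx'
    by_cases hxy : x = y
    · subst hxy
      have e : (fun y' => JpiBD a b (x, x) (x', y')) =
          fun y' => pmBD (x+1, x+1) (b x) (x', y') + pmBD (x-1, x-1) (a x) (x', y') := by
        funext y'; simp [JpiBD]
      rw [e, ((hasSum_pmBD_fst (x+1) (x+1) (b x) x').add
        (hasSum_pmBD_fst (x-1) (x-1) (a x) x')).tsum_eq]
      simp only [J]
      split_ifs <;> first | (exfalso; omega) | simp
    · have e : (fun y' => JpiBD a b (x, y) (x', y')) =
          fun y' => pmBD (x+1, y) (b x) (x', y') + pmBD (x-1, y) (a x) (x', y') +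
            pmBD (x, y+1) (b y) (x', y') + pmBD (x, y-1) (a y) (x', y') := by
        funext y'; simp [JpiBD, hxy]
      rw [e, ((((hasSum_pmBD_fst (x+1) y (b x) x').add
        (hasSum_pmBD_fst (x-1) y (a x) x')).add
        (hasSum_pmBD_fst x (y+1) (b y) x')).add
        (hasSum_pmBD_fst x (y-1) (a y) x')).tsum_eq]
      simp only [J]
      split_ifs <;> first | (exfalso; omega) | simp
  · -- second marginal
    intro x y y' hy'
    by_cases hxy : x = y
    · subst hxy
      have e : (fun x' => JpiBD a b (x, x) (x', y')) =
          fun x' => pmBD (x+1, x+1) (b x) (x', y') + pmBD (x-1, x-1) (a x) (x', y') := by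
        funext x'; simp [JpiBD]
      rw [e, ((hasSum_pmBD_snd (x+1) (x+1) (b x) y').add
        (hasSum_pmBD_snd (x-1) (x-1) (a x) y')).tsum_eq]
      simp only [J]
      split_ifs <;> first | (exfalso; omega) | simp
    · have e : (fun x' => JpiBD a b (x, y) (x', y')) =
          fun x' => pmBD (x+1, y) (b x) (x', y') + pmBD (x-1, y) (a x) (x', y') +
            pmBD (x, y+1) (b y) (x', y') + pmBD (x, y-1) (a y) (x', y') := by
        funext x'; simp [JpiBD, hxy]
      rw [e, ((((hasSum_pmBD_snd (x+1) y (b x) y').add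
        (hasSum_pmBD_snd (x-1) y (a x) y')).add
        (hasSum_pmBD_snd x (y+1) (b y) y')).add
        (hasSum_pmBD_snd x (y-1) (a y) y')).tsum_eq]
      simp only [J]
      split_ifs <;> first | (exfalso; omega) | simp
  · -- diagonal absorbing
    intro x w hw
    have h1 : w ≠ (x+1, x+1) := by rintro rfl; exact hw rfl
    have h2 : w ≠ (x-1, x-1) := by rintro rfl; exact hw rfl
    simp [JpiBD, pmBD, h1, h2]
  · -- contraction
    intro m n
    by_cases hmn : m = n
    · subst hmn
      have hs : HasSum (fun w : ℕ × ℕ => JpiBD a b (m, m) w * (d w.1 w.2 - d m m))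
          (b m * (d (m+1) (m+1) - d m m) + a m * (d (m-1) (m-1) - d m m)) := by
        have h := (hasSum_pmBD_mul (m+1, m+1) (b m) (fun w => d w.1 w.2 - d m m)).add
          (hasSum_pmBD_mul (m-1, m-1) (a m) (fun w => d w.1 w.2 - d m m))
        convert h using 2 with w
        simp [JpiBD]; ring
      rw [hs.tsum_eq]
      simp [hd]
    · have hs : HasSum (fun w : ℕ × ℕ => JpiBD a b (m, n) w * (d w.1 w.2 - d m n))
          (b m * (d (m+1) n - d m n) + a m * (d (m-1) n - d m n) +
           b n * (d m (n+1) - d m n) + a n * (d m (n-1) - d m n)) := by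
        have h := (((hasSum_pmBD_mul (m+1, n) (b m) (fun w => d w.1 w.2 - d m n)).add
          (hasSum_pmBD_mul (m-1, n) (a m) (fun w => d w.1 w.2 - d m n))).add
          (hasSum_pmBD_mul (m, n+1) (b n) (fun w => d w.1 w.2 - d m n))).add
          (hasSum_pmBD_mul (m, n-1) (a n) (fun w => d w.1 w.2 - d m n))
        convert h using 2 with w
        simp [JpiBD, hmn]; ring
      rw [hs.tsum_eq]
      rcases Ne.lt_or_gt hmn with hlt | hlt
      · -- m < n
        have hmn' : ((m:ℝ)) ≤ n := Nat.cast_le.mpr hlt.le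
        have hm1n : ((m:ℝ)) + 1 ≤ n := by exact_mod_cast Nat.cast_le.mpr hlt
        have e0 : d m n = (n:ℝ) - m := by
          rw [hd, abs_sub_comm, abs_of_nonneg (by linarith)]
        have e1 : d (m+1) n = (n:ℝ) - m - 1 := by
          rw [hd, abs_sub_comm, abs_of_nonneg (by push_cast; linarith)]
          push_cast; ring
        have e3 : d m (n+1) = (n:ℝ) - m + 1 := by
          rw [hd, abs_sub_comm, abs_of_nonneg (by push_cast; linarith)]
          push_cast; ring
        have hn1 : 1 ≤ n := by omega
        have e4 : d m (n-1) = (n:ℝ) - m - 1 := by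
          rw [hd, abs_sub_comm, abs_of_nonneg] <;> rw [Nat.cast_sub hn1] <;> push_cast <;> linarith
        have ht := teleBD a b κ hκ m n hlt.le
        by_cases hm0 : m = 0
        · subst hm0
          have e2 : d (0-1) n - d 0 n = 0 := by norm_num
          rw [e0, e1, e3, e4]
          rw [show (0:ℕ) - 1 = 0 from rfl] at *
          simp only [e0] at *
          nlinarith [ht, ha0, hb 0, hbpos 0]
        · have hm1 : 1 ≤ m := by omega
          have e2 : d (m-1) n = (n:ℝ) - m + 1 := by
            rw [hd, abs_sub_comm, abs_of_nonneg] <;> rw [Nat.cast_sub hm1] <;> push_cast <;> linarith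
          rw [e0, e1, e2, e3, e4]
          nlinarith [ht]
      · -- n < m
        have hmn' : ((n:ℝ)) ≤ m := Nat.cast_le.mpr hlt.le
        have hn1m : ((n:ℝ)) + 1 ≤ m := by exact_mod_cast Nat.cast_le.mpr hlt
        have e0 : d m n = (m:ℝ) - n := by
          rw [hd, abs_of_nonneg (by linarith)]
        have e1 : d (m+1) n = (m:ℝ) - n + 1 := by
          rw [hd, abs_of_nonneg (by push_cast; linarith)]
          push_cast; ring
        have e3 : d m (n+1) = (m:ℝ) - n - 1 := by
          rw [hd, abs_of_nonneg (by push_cast; linarith)]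
          push_cast; ring
        have hm1 : 1 ≤ m := by omega
        have e2 : d (m-1) n = (m:ℝ) - n - 1 := by
          rw [hd, abs_of_nonneg] <;> rw [Nat.cast_sub hm1] <;> push_cast <;> linarith
        have ht := teleBD a b κ hκ n m hlt.le
        by_cases hn0 : n = 0
        · subst hn0
          rw [e0, e1, e2, e3]
          rw [show (0:ℕ) - 1 = 0 from rfl] at *
          simp only [e0] at *
          nlinarith [ht, ha0]
        · have hn1 : 1 ≤ n := by omega
          have e4 : d m (n-1) = (m:ℝ) - n + 1 := by
            rw [hd, abs_of_nonneg] <;> rw [Nat.cast_sub hn1] <;> push_cast <;> linarith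
          rw [e0, e1, e2, e3, e4]
          nlinarith [ht]
end

section
/- Let Lf(n) = b(f(n+1)-f(n)) + a(f(n-1)-f(n)) on ℕ with a > b > 0 (f(-1):=f(0)). For h(n) = (a/b)^{n/2}, one has Lh(n) = -(√a-√b)²h(n) for all n ≥ 1 and Lh(0) ≥ -(√a-√b)²h(0); hence Lh(n+1) - Lh(n) ≤ -(√a-√b)²(h(n+1)-h(n)) for all n ∈ ℕ. -/
/-!
With `r = √(a/b) = √a/√b` one has `b r = a / r = √a √b`, so the geometric function `rⁿ` is an
exact eigenfunction of the interior generator with eigenvalue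
`b r + a / r - (a + b) = -(√a - √b)²`. At the reflecting boundary only the birth term survives,
and `b (r - 1) + (√a - √b)² = √a (√a - √b) ≥ 0` because `a ≥ b`. The increment inequality is then
an equality for `n ≥ 1` and reduces to the boundary inequality for `n = 0`.
-/

open Real

/-- The truncated subtraction `0 - 1 = 0` encodes the reflecting convention `f (-1) = f 0`. -/
def birthDeathGen (a b : ℝ) (f : ℕ → ℝ) (n : ℕ) : ℝ :=
  b * (f (n + 1) - f n) + a * (f (n - 1) - f n)

theorem birthDeathGen_zero (a b : ℝ) (f : ℕ → ℝ) :
    birthDeathGen a b f 0 = b * (f 1 - f 0) := by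
  simp [birthDeathGen]

theorem birthDeathGen_pow (a b : ℝ) {r : ℝ} (hr : r ≠ 0) {n : ℕ} (hn : 1 ≤ n) :
    birthDeathGen a b (r ^ ·) n = (b * r + a / r - (a + b)) * r ^ n := by
  obtain ⟨m, rfl⟩ := Nat.exists_eq_add_of_le' hn
  simp only [birthDeathGen, Nat.add_sub_cancel]
  field_simp
  ring

theorem mul_sqrt_div_add_div_sqrt_div {a b : ℝ} (ha : 0 < a) (hb : 0 < b) :
    b * √(a / b) + a / √(a / b) - (a + b) = -(√a - √b) ^ 2 := by
  rw [sqrt_div' a hb.le]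
  field_simp
  rw [sub_sq, sq_sqrt ha.le, sq_sqrt hb.le]
  linear_combination (-2 * √a ^ 2) * sq_sqrt hb.le - 2 * b * sq_sqrt ha.le

theorem birthDeathGen_sqrt_div_pow {a b : ℝ} (ha : 0 < a) (hb : 0 < b) {n : ℕ} (hn : 1 ≤ n) :
    birthDeathGen a b (√(a / b) ^ ·) n = -(√a - √b) ^ 2 * √(a / b) ^ n := by
  rw [birthDeathGen_pow a b (sqrt_pos.2 (div_pos ha hb)).ne' hn,
    mul_sqrt_div_add_div_sqrt_div ha hb]

theorem neg_sq_sub_le_birthDeathGen_sqrt_div_pow_zero {a b : ℝ} (hb : 0 < b) (hab : b ≤ a) :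
    -(√a - √b) ^ 2 ≤ birthDeathGen a b (√(a / b) ^ ·) 0 := by
  have hsab : √b ≤ √a := sqrt_le_sqrt hab
  have hba : b * (√(a / b) - 1) = √b * (√a - √b) := by
    rw [sqrt_div' a hb.le]
    field_simp
    rw [sq_sqrt hb.le]
  rw [birthDeathGen_zero, pow_one, pow_zero, hba]
  nlinarith [mul_nonneg (sqrt_nonneg a) (sub_nonneg.2 hsab)]

theorem succ_sub_le_of_eigen_of_ge_zero {L f : ℕ → ℝ} {γ : ℝ}
    (hpos : ∀ n, 1 ≤ n → L n = -γ * f n) (hzero : L 0 ≥ -γ * f 0) (n : ℕ) :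
    L (n + 1) - L n ≤ -γ * (f (n + 1) - f n) := by
  rw [hpos (n + 1) n.succ_pos]
  rcases n.eq_zero_or_pos with rfl | hn
  · linarith
  · rw [hpos n hn]
    linarith

/-- For the constant-rate birth-death generator
`L f (n) = b (f (n+1) - f n) + a (f (n-1) - f n)` on `ℕ` with `a > b > 0`
(reflecting convention `f(-1) := f 0`), the function `h(n) = (a/b)^{n/2}`
satisfies `L h (n) = -(√a - √b)² h n` for `n ≥ 1`, `L h (0) ≥ -(√a - √b)² h 0`,
hence `L h (n+1) - L h (n) ≤ -(√a - √b)² (h (n+1) - h n)` for all `n`. -/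
theorem stmt5 (a b : ℝ) (hb : 0 < b) (hab : b < a) :
    let h : ℕ → ℝ := fun n => Real.sqrt (a / b) ^ n
    let Lh : ℕ → ℝ := fun n => b * (h (n + 1) - h n) + a * (h (n - 1) - h n)
    let γ : ℝ := (Real.sqrt a - Real.sqrt b) ^ 2
    (∀ n : ℕ, 1 ≤ n → Lh n = -γ * h n) ∧
    (Lh 0 ≥ -γ * h 0) ∧
    (∀ n : ℕ, Lh (n + 1) - Lh n ≤ -γ * (h (n + 1) - h n)) := by
  intro h Lh γ
  have hpos : ∀ n : ℕ, 1 ≤ n → Lh n = -γ * h n := fun n hn =>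
    birthDeathGen_sqrt_div_pow (hb.trans hab) hb hn
  have hzero : Lh 0 ≥ -γ * h 0 := by
    show -γ * h 0 ≤ birthDeathGen a b h 0
    simpa only [h, γ, pow_zero, mul_one] using
      neg_sq_sub_le_birthDeathGen_sqrt_div_pow_zero hb hab.le
  exact ⟨hpos, hzero, succ_sub_le_of_eigen_of_ge_zero hpos hzero⟩
end

section
/- Let Δ be the Laplacian on the discrete circle S = ℤ/nℤ (n ≥ 3), with graph metric d_G, graph diameter D_G = ⌊n/2⌋. For the metric d(x,y) = sin(d_G(x,y)π/n), there exists a coupling generator Δ^π of Δ such that Δ^π d(x,y) ≤ -(1 - cos(2π/n)) d(x,y) for all x ≠ y; consequently W₁-exponential contraction holds with rate λ₁ = 1 - cos(2π/n), the spectral gap of Δ. -/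
open NormedSpace Finset Matrix
open scoped Real

attribute [local instance] Matrix.linftyOpNormedAddCommGroup Matrix.linftyOpNormedSpace
  Matrix.linftyOpNormedRing Matrix.linftyOpNormedAlgebra

namespace Matrix

variable {ι κ : Type*} [Fintype ι] [DecidableEq ι] [Fintype κ] [DecidableEq κ]

theorem exp_smul_add_smul_one (Q : Matrix ι ι ℝ) (t c : ℝ) :
    exp (t • (Q + c • 1)) = Real.exp (c * t) • exp (t • Q) := by
  rw [smul_add, smul_smul, ← Algebra.algebraMap_eq_smul_one,
    exp_add_of_commute _ _ (Algebra.commute_algebraMap_right _ _)]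
  erw [← algebraMap_exp_comm]
  rw [Algebra.algebraMap_eq_smul_one, mul_smul_one, Real.exp_eq_exp_ℝ, mul_comm]

theorem exp_apply_nonneg {P : Matrix ι ι ℝ} (hP : ∀ i j, 0 ≤ P i j) (i j : ι) :
    0 ≤ exp P i j := by
  have hsum := Pi.hasSum.mp (Pi.hasSum.mp (exp_series_hasSum_exp' (𝕂 := ℝ) P) i) j
  exact hsum.nonneg fun k => mul_nonneg (by positivity) (pow_apply_nonneg hP k i j)

theorem exp_smul_apply_nonneg {Q : Matrix ι ι ℝ} (hQ : ∀ i j, i ≠ j → 0 ≤ Q i j) {t : ℝ}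
    (ht : 0 ≤ t) (i j : ι) : 0 ≤ exp (t • Q) i j := by
  set c : ℝ := ∑ k, |Q k k|
  have hshift : ∀ i j, 0 ≤ (t • (Q + c • 1)) i j := by
    intro i j
    refine mul_nonneg ht ?_
    obtain rfl | hij := eq_or_ne i j
    · have := single_le_sum (f := fun k => |Q k k|) (fun k _ => abs_nonneg _) (mem_univ i)
      simp only [add_apply, smul_apply, one_apply_eq, smul_eq_mul, mul_one]
      linarith [neg_abs_le (Q i i)]
    · simpa [one_apply_ne hij] using hQ i j hij
  have := exp_apply_nonneg hshift i j
  rw [exp_smul_add_smul_one, smul_apply, smul_eq_mul] at this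
  exact nonneg_of_mul_nonneg_right this (Real.exp_pos _)

theorem exp_mul_eq_mul_exp {M : Matrix ι ι ℝ} {D : Matrix κ κ ℝ} {A : Matrix ι κ ℝ}
    (h : M * A = A * D) : exp M * A = A * exp D := by
  have hpow : ∀ k : ℕ, M ^ k * A = A * D ^ k := by
    intro k
    induction k with
    | zero => simp
    | succ k ih => rw [pow_succ', Matrix.mul_assoc, ih, ← Matrix.mul_assoc, h, Matrix.mul_assoc,
        ← pow_succ']
  have hM := (exp_series_hasSum_exp' (𝕂 := ℝ) M).map (addMonoidHomMulRight A)
    (continuous_id.matrix_mul continuous_const)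
  have hD := (exp_series_hasSum_exp' (𝕂 := ℝ) D).map (addMonoidHomMulLeft A)
    (continuous_const.matrix_mul continuous_id)
  refine hM.unique ?_
  convert hD using 1
  · funext k
    change ((k.factorial⁻¹ : ℝ) • M ^ k) * A = A * ((k.factorial⁻¹ : ℝ) • D ^ k)
    rw [Matrix.smul_mul, Matrix.mul_smul, hpow]
  · rfl

theorem exp_smul_mulVec_le_of_mulVec_nonpos {B : Matrix ι ι ℝ} (hB : ∀ i j, i ≠ j → 0 ≤ B i j)
    {V : ι → ℝ} (hV : ∀ i, (B *ᵥ V) i ≤ 0) {t : ℝ} (ht : 0 ≤ t) (i : ι) :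
    (exp (t • B) *ᵥ V) i ≤ V i := by
  have hderiv : ∀ s,
      HasDerivAt (fun u : ℝ => (exp (u • B) *ᵥ V) i) (((exp (s • B) * B) *ᵥ V) i) s := by
    intro s
    have h := fun j => hasDerivAt_pi.mp (hasDerivAt_pi.mp (hasDerivAt_exp_smul_const B s) i) j
    simp only [mulVec, dotProduct]
    exact HasDerivAt.fun_sum fun j _ => (h j).mul_const (V j)
  have hanti : AntitoneOn (fun u : ℝ => (exp (u • B) *ᵥ V) i) (Set.Ici 0) := by
    refine antitoneOn_of_hasDerivWithinAt_nonpos (convex_Ici 0)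
      (fun s _ => (hderiv s).continuousAt.continuousWithinAt)
      (fun s _ => (hderiv s).hasDerivWithinAt) fun s hs => ?_
    rw [← mulVec_mulVec, mulVec, dotProduct]
    rw [interior_Ici] at hs
    exact sum_nonpos fun j _ =>
      mul_nonpos_of_nonneg_of_nonpos (exp_smul_apply_nonneg hB (le_of_lt hs) i j) (hV j)
  simpa using hanti Set.self_mem_Ici ht ht

theorem exp_smul_mulVec_le {Q : Matrix ι ι ℝ} (hQ : ∀ i j, i ≠ j → 0 ≤ Q i j) {V : ι → ℝ}
    {c : ℝ} (hV : ∀ i, (Q *ᵥ V) i ≤ c * V i) {t : ℝ} (ht : 0 ≤ t) (i : ι) :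
    (exp (t • Q) *ᵥ V) i ≤ Real.exp (c * t) * V i := by
  have hB : ∀ i j, i ≠ j → 0 ≤ (Q + (-c) • 1) i j := fun i j hij => by
    simpa [one_apply_ne hij] using hQ i j hij
  have hBV : ∀ i, ((Q + (-c) • 1) *ᵥ V) i ≤ 0 := fun i => by
    simp only [add_mulVec, smul_mulVec, one_mulVec, Pi.add_apply, Pi.smul_apply, smul_eq_mul]
    linarith [hV i]
  have := exp_smul_mulVec_le_of_mulVec_nonpos hB hBV ht i
  rwa [exp_smul_add_smul_one, smul_mulVec, Pi.smul_apply, smul_eq_mul, neg_mul, Real.exp_neg,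
    inv_mul_le_iff₀ (Real.exp_pos _)] at this

end Matrix

theorem tcost_le_of_isCoupling {S : Type*} {c : S → S → ℝ} (hc : ∀ x y, 0 ≤ c x y)
    {p q : S → ℝ} {γ : S × S → ℝ} (hγ : IsCoupling p q γ) :
    Tcost c p q ≤ ∑' z, c z.1 z.2 * γ z :=
  csInf_le ⟨0, fun _ ⟨_, hγ', hr⟩ => hr ▸ tsum_nonneg fun z => mul_nonneg (hc _ _) (hγ'.1 z)⟩
    ⟨γ, hγ, rfl⟩

section JumpGenerator

variable {S : Type*} [DecidableEq S]

noncomputable def jumpGenerator [Fintype S] (J : S → S → ℝ) : Matrix S S ℝ :=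
  of J - diagonal fun x => ∑ y, J x y

theorem jumpGenerator_apply_of_ne [Fintype S] (J : S → S → ℝ) {x y : S} (h : x ≠ y) :
    jumpGenerator J x y = J x y := by
  simp [jumpGenerator, diagonal_apply_ne _ h]

theorem sum_jumpGenerator_apply [Fintype S] (J : S → S → ℝ) (x : S) :
    ∑ y, jumpGenerator J x y = 0 := by
  simp [jumpGenerator, sum_sub_distrib, diagonal_apply]

theorem jumpGenerator_mulVec [Fintype S] (J : S → S → ℝ) (V : S → ℝ) (x : S) :
    (jumpGenerator J *ᵥ V) x = ∑ y, J x y * (V y - V x) := by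
  rw [jumpGenerator, sub_mulVec, Pi.sub_apply, mulVec_diagonal, sum_mul]
  simp only [mulVec, dotProduct, of_apply, mul_sub, sum_sub_distrib]

def projMatrix {T : Type*} (p : T → S) : Matrix T S ℝ := of fun w s => if p w = s then 1 else 0

theorem mul_projMatrix_apply {T U : Type*} [Fintype T] (M : Matrix U T ℝ) (p : T → S) (u : U)
    (s : S) : (M * projMatrix p) u s = ∑ w with p w = s, M u w := by
  simp [projMatrix, mul_apply, sum_filter]

theorem projMatrix_mul_apply [Fintype S] {T U : Type*} (p : T → S) (N : Matrix S U ℝ) (w : T)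
    (u : U) : (projMatrix p * N) w u = N (p w) u := by
  simp [projMatrix, mul_apply]

theorem jumpGenerator_mul_projMatrix [Fintype S] {T : Type*} [Fintype T] [DecidableEq T]
    {K : T → T → ℝ} {J : S → S → ℝ} {p : T → S}
    (hK : ∀ z s, s ≠ p z → ∑ w with p w = s, K z w = J (p z) s) :
    jumpGenerator K * projMatrix p = projMatrix p * jumpGenerator J := by
  have hoff : ∀ z s, s ≠ p z →
      ∑ w with p w = s, jumpGenerator K z w = jumpGenerator J (p z) s := by
    intro z s hs
    rw [jumpGenerator_apply_of_ne _ hs.symm, ← hK z s hs]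
    refine sum_congr rfl fun w hw => jumpGenerator_apply_of_ne _ ?_
    rintro rfl
    exact hs (mem_filter.mp hw).2.symm
  ext z s
  rw [mul_projMatrix_apply, projMatrix_mul_apply]
  obtain rfl | hs := eq_or_ne s (p z)
  · have hsum :
        ∑ s, ∑ w with p w = s, jumpGenerator K z w = ∑ s, jumpGenerator J (p z) s := by
      rw [sum_fiberwise, sum_jumpGenerator_apply, sum_jumpGenerator_apply]
    rw [← add_sum_erase _ _ (mem_univ (p z)), ← add_sum_erase _ _ (mem_univ (p z)),
      sum_congr rfl fun s hs => hoff z s (ne_of_mem_erase hs)] at hsum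
    exact add_right_cancel hsum
  · exact hoff z s hs

theorem exp_smul_jumpGenerator_fiber_sum [Fintype S] {T : Type*} [Fintype T] [DecidableEq T]
    {K : T → T → ℝ} {J : S → S → ℝ} {p : T → S}
    (hK : ∀ z s, s ≠ p z → ∑ w with p w = s, K z w = J (p z) s) (t : ℝ) (z : T) (s : S) :
    ∑ w with p w = s, exp (t • jumpGenerator K) z w = exp (t • jumpGenerator J) (p z) s := by
  have h : t • jumpGenerator K * projMatrix p = projMatrix p * t • jumpGenerator J := by
    rw [Matrix.smul_mul, jumpGenerator_mul_projMatrix hK, Matrix.mul_smul]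
  rw [← mul_projMatrix_apply, exp_mul_eq_mul_exp h, projMatrix_mul_apply]

end JumpGenerator

section PiSingle

variable {α : Type*} [Fintype α] [DecidableEq α]

theorem sum_pi_single_fst (a b : α) (c : ℝ) (x : α) :
    ∑ y, (Pi.single (a, b) c : α × α → ℝ) (x, y) = (Pi.single a c : α → ℝ) x := by
  by_cases h : x = a <;> simp [Pi.single_apply, h]

theorem sum_pi_single_snd (a b : α) (c : ℝ) (y : α) :
    ∑ x, (Pi.single (a, b) c : α × α → ℝ) (x, y) = (Pi.single b c : α → ℝ) y := by
  by_cases h : y = b <;> simp [Pi.single_apply, h]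

theorem sum_pi_single_mul (a : α) (c : ℝ) (f : α → ℝ) :
    ∑ w, (Pi.single a c : α → ℝ) w * f w = c * f a := by
  simp [Pi.single_apply]

end PiSingle

section CouplingKernel

variable {S : Type*} [Fintype S] [DecidableEq S]

theorem sum_filter_fst_eq (f : S × S → ℝ) (x : S) :
    ∑ w with w.1 = x, f w = ∑ y, f (x, y) := by
  rw [sum_filter, Fintype.sum_prod_type,
    sum_eq_single x (fun b _ hb => by simp [hb]) (by simp)]
  simp

theorem sum_filter_snd_eq (f : S × S → ℝ) (y : S) :
    ∑ w with w.2 = y, f w = ∑ x, f (x, y) := by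
  rw [sum_filter, Fintype.sum_prod_type_right,
    sum_eq_single y (fun b _ hb => by simp [hb]) (by simp)]
  simp

variable {J : S → S → ℝ} {Jπ : S × S → S × S → ℝ}

theorem IsCouplingKernel.isCoupling_exp (h : IsCouplingKernel J Jπ) {t : ℝ} (ht : 0 ≤ t)
    (x y : S) :
    IsCoupling (exp (t • jumpGenerator J) x) (exp (t • jumpGenerator J) y)
      (exp (t • jumpGenerator Jπ) (x, y)) := by
  obtain ⟨hnonneg, hfst, hsnd, -⟩ := h
  refine ⟨exp_smul_apply_nonneg (fun z w hzw => ?_) ht _, .of_finite, fun x' => ?_, fun y' => ?_⟩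
  · exact (jumpGenerator_apply_of_ne Jπ hzw).symm ▸ hnonneg z w
  · rw [tsum_fintype, ← sum_filter_fst_eq]
    refine exp_smul_jumpGenerator_fiber_sum (fun z s hs => ?_) t (x, y) x'
    rw [sum_filter_fst_eq, ← hfst z.1 z.2 s hs, tsum_fintype]
  · rw [tsum_fintype, ← sum_filter_snd_eq]
    refine exp_smul_jumpGenerator_fiber_sum (fun z s hs => ?_) t (x, y) y'
    rw [sum_filter_snd_eq, ← hsnd z.1 z.2 s hs, tsum_fintype]

theorem IsCouplingKernel.tcost_exp_le (h : IsCouplingKernel J Jπ) {c : S → S → ℝ}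
    (hc : ∀ x y, 0 ≤ c x y) (hc_diag : ∀ x, c x x = 0) {κ : ℝ}
    (hdrift : ∀ x y, x ≠ y → ∑' w, Jπ (x, y) w * (c w.1 w.2 - c x y) ≤ -κ * c x y)
    {t : ℝ} (ht : 0 ≤ t) (x y : S) :
    Tcost c (exp (t • jumpGenerator J) x) (exp (t • jumpGenerator J) y) ≤
      Real.exp (-κ * t) * c x y := by
  set V : S × S → ℝ := fun w => c w.1 w.2
  have hV : ∀ z, (jumpGenerator Jπ *ᵥ V) z ≤ -κ * V z := by
    rintro ⟨x, y⟩
    rw [jumpGenerator_mulVec]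
    obtain rfl | hxy := eq_or_ne x y
    · -- the diagonal is absorbing and `c` vanishes on it
      simp only [V, hc_diag, mul_zero, sub_zero]
      refine (sum_eq_zero fun w _ => ?_).le
      obtain hw | hw := eq_or_ne w.1 w.2
      · rw [hw, hc_diag, mul_zero]
      · rw [h.2.2.2 x w hw, zero_mul]
    · exact (tsum_fintype _).symm.trans_le (hdrift x y hxy)
  have hoff : ∀ z w, z ≠ w → 0 ≤ jumpGenerator Jπ z w := fun z w hzw =>
    (jumpGenerator_apply_of_ne Jπ hzw).symm ▸ h.1 z w
  calc Tcost c _ _ ≤ ∑' w, c w.1 w.2 * exp (t • jumpGenerator Jπ) (x, y) w :=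
        tcost_le_of_isCoupling hc (h.isCoupling_exp ht x y)
    _ = (exp (t • jumpGenerator Jπ) *ᵥ V) (x, y) := by
        simp only [tsum_fintype, mulVec, dotProduct, V, mul_comm]
    _ ≤ Real.exp (-κ * t) * c x y := exp_smul_mulVec_le hoff hV ht (x, y)

end CouplingKernel

theorem sin_three_mul_div_two_sub (a : ℝ) :
    Real.sin (3 * a) / 2 - 3 / 2 * Real.sin a = -(1 - Real.cos (2 * a)) * Real.sin a := by
  rw [Real.sin_three_mul, Real.cos_two_mul]
  linear_combination (-2 * Real.sin a) * Real.sin_sq_add_cos_sq a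

section Circle

variable {n : ℕ}

theorem ZMod.natCast_ne_zero_of_lt {k : ℕ} (hk0 : 0 < k) (hkn : k < n) : (k : ZMod n) ≠ 0 := by
  rw [Ne, ZMod.natCast_eq_zero_iff]
  exact fun h => (Nat.le_of_dvd hk0 h).not_gt hkn

noncomputable def sinDist (n : ℕ) (δ : ZMod n) : ℝ := Real.sin (δ.val * π / n)

theorem sinDist_zero : sinDist n 0 = 0 := by simp [sinDist]

noncomputable def circleJump (n : ℕ) (x y : ZMod n) : ℝ :=
  if y = x + 1 ∨ y = x - 1 then 1 / 2 else 0

theorem circleJump_eq (hn : 3 ≤ n) (x : ZMod n) :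
    circleJump n x = Pi.single (x + 1) (1 / 2) + Pi.single (x - 1) (1 / 2) := by
  ext y
  have htwo : (2 : ZMod n) ≠ 0 := by
    exact_mod_cast ZMod.natCast_ne_zero_of_lt (k := 2) (by omega) (by omega)
  have hne : x + 1 ≠ x - 1 := fun h => htwo (by linear_combination h)
  by_cases hplus : y = x + 1
  · simp [circleJump, hplus, hne]
  · by_cases hminus : y = x - 1
    · simp [circleJump, hminus, hne.symm]
    · simp [circleJump, hplus, hminus]

/-- Synchronous on the diagonal, reflection `(x ± 1, y ∓ 1)` at distance at least two, and for
neighbours a mixture in which either walker jumps onto the other or both jump apart. -/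
noncomputable def circleCoupling (n : ℕ) (z : ZMod n × ZMod n) : ZMod n × ZMod n → ℝ :=
  if z.1 = z.2 then
    Pi.single (z.1 + 1, z.1 + 1) (1 / 2) + Pi.single (z.1 - 1, z.1 - 1) (1 / 2)
  else if z.2 - z.1 = 1 ∨ z.1 - z.2 = 1 then
    Pi.single (z.1, z.1) (1 / 2) + Pi.single (z.2, z.2) (1 / 2) +
      Pi.single (2 * z.1 - z.2, 2 * z.2 - z.1) (1 / 2)
  else Pi.single (z.1 + 1, z.2 - 1) (1 / 2) + Pi.single (z.1 - 1, z.2 + 1) (1 / 2)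

variable [NeZero n]

theorem ZMod.two_le_val_and_val_add_two_le {δ : ZMod n} (h0 : δ ≠ 0) (h1 : δ ≠ 1) (hm1 : δ ≠ -1) :
    2 ≤ δ.val ∧ δ.val + 2 ≤ n := by
  have hlt := ZMod.val_lt δ
  have hval := ZMod.natCast_zmod_val δ
  refine ⟨?_, ?_⟩
  · by_contra! h
    interval_cases hv : δ.val
    · exact h0 ((ZMod.val_eq_zero δ).mp hv)
    · exact h1 (by rw [← hval, Nat.cast_one])
  · by_contra! h
    have hv : δ.val + 1 = n := by omega
    apply hm1
    rw [← hval, eq_neg_iff_add_eq_zero, ← Nat.cast_one, ← Nat.cast_add, hv, ZMod.natCast_self]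

theorem sin_mul_pi_div_nonneg {k : ℝ} (hk0 : 0 ≤ k) (hkn : k ≤ n) :
    0 ≤ Real.sin (k * π / n) := by
  have hn : (0 : ℝ) < n := by exact_mod_cast Nat.pos_of_ne_zero (NeZero.ne n)
  refine Real.sin_nonneg_of_nonneg_of_le_pi (by positivity) ?_
  rw [div_le_iff₀ hn, mul_comm π]
  exact mul_le_mul_of_nonneg_right hkn Real.pi_pos.le

theorem sinDist_nonneg (δ : ZMod n) : 0 ≤ sinDist n δ :=
  sin_mul_pi_div_nonneg (Nat.cast_nonneg _) (by exact_mod_cast (ZMod.val_lt δ).le)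

theorem sinDist_intCast (k : ℤ) : sinDist n k = |Real.sin (k * π / n)| := by
  have hn : (n : ℝ) ≠ 0 := Nat.cast_ne_zero.mpr (NeZero.ne n)
  have hval : ((k : ZMod n).val : ℝ) = ((k % n : ℤ) : ℝ) := by exact_mod_cast ZMod.val_intCast k
  have hk : (k : ℝ) * π / n = ((k % n : ℤ) : ℝ) * π / n + ((k / n : ℤ) : ℝ) * π := by
    conv_lhs => rw [← Int.emod_add_mul_ediv k n]
    push_cast
    field_simp
  rw [hk, Real.sin_add_int_mul_pi, abs_mul, abs_neg_one_zpow, one_mul, ← hval]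
  exact (abs_of_nonneg (sinDist_nonneg _)).symm

theorem sinDist_neg (δ : ZMod n) : sinDist n (-δ) = sinDist n δ := by
  obtain ⟨k, rfl⟩ := ZMod.intCast_surjective δ
  rw [← Int.cast_neg, sinDist_intCast, sinDist_intCast, Int.cast_neg, neg_mul, neg_div,
    Real.sin_neg, abs_neg]

theorem sinDist_natCast {k : ℕ} (hk : k ≤ n) : sinDist n k = Real.sin (k * π / n) := by
  rw [← Int.cast_natCast, sinDist_intCast, Int.cast_natCast,
    abs_of_nonneg (sin_mul_pi_div_nonneg (Nat.cast_nonneg _) (by exact_mod_cast hk))]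

theorem sin_min_val_eq_sinDist (x y : ZMod n) :
    Real.sin ((min (x - y).val (y - x).val : ℕ) * π / n) = sinDist n (x - y) := by
  rcases min_choice (x - y).val (y - x).val with h | h <;> rw [h]
  · rfl
  · rw [← sinDist_neg, neg_sub]; rfl

theorem sinDist_add_two_add_sinDist_sub_two {δ : ZMod n} (h2 : 2 ≤ δ.val)
    (hn2 : δ.val + 2 ≤ n) :
    sinDist n (δ + 2) + sinDist n (δ - 2) = 2 * Real.cos (2 * π / n) * sinDist n δ := by
  have hval := ZMod.natCast_zmod_val δ
  have hplus : δ + 2 = ((δ.val + 2 : ℕ) : ZMod n) := by push_cast [hval]; rfl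
  have hminus : δ - 2 = ((δ.val - 2 : ℕ) : ZMod n) := by push_cast [Nat.cast_sub h2, hval]; rfl
  rw [hplus, hminus, sinDist_natCast hn2, sinDist_natCast (by omega), sinDist]
  push_cast [Nat.cast_sub h2]
  rw [add_mul, sub_mul, add_div, sub_div, Real.sin_add, Real.sin_sub, mul_div_assoc 2 π]
  ring

theorem circleCoupling_sum_fst (hn : 3 ≤ n) {x x' : ZMod n} (y : ZMod n) (hx : x' ≠ x) :
    ∑ y', circleCoupling n (x, y) (x', y') = circleJump n x x' := by
  rw [circleJump_eq hn]
  unfold circleCoupling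
  split_ifs with hxy hnb
  · simp [sum_add_distrib, sum_pi_single_fst]
  · simp only [Pi.add_apply, sum_add_distrib, sum_pi_single_fst, Pi.single_eq_of_ne hx,
      zero_add]
    rcases hnb with h | h
    · rw [show y = x + 1 by linear_combination h, show 2 * x - (x + 1) = x - 1 by ring]
    · rw [show y = x - 1 by linear_combination -h, show 2 * x - (x - 1) = x + 1 by ring,
        add_comm]
  · simp [sum_add_distrib, sum_pi_single_fst]

theorem circleCoupling_sum_snd (hn : 3 ≤ n) {y y' : ZMod n} (x : ZMod n) (hy : y' ≠ y) :
    ∑ x', circleCoupling n (x, y) (x', y') = circleJump n y y' := by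
  rw [circleJump_eq hn]
  unfold circleCoupling
  split_ifs with hxy hnb
  · obtain rfl : x = y := hxy
    simp [sum_add_distrib, sum_pi_single_snd]
  · simp only [Pi.add_apply, sum_add_distrib, sum_pi_single_snd, Pi.single_eq_of_ne hy,
      add_zero]
    rcases hnb with h | h
    · rw [show x = y - 1 by linear_combination -h, show 2 * y - (y - 1) = y + 1 by ring,
        add_comm]
    · rw [show x = y + 1 by linear_combination h, show 2 * y - (y + 1) = y - 1 by ring]
  · simp [sum_add_distrib, sum_pi_single_snd, add_comm]

theorem isCouplingKernel_circleCoupling (hn : 3 ≤ n) :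
    IsCouplingKernel (circleJump n) (circleCoupling n) := by
  refine ⟨fun z w => ?_, fun x y x' hx => ?_, fun x y y' hy => ?_, fun x w hw => ?_⟩
  · unfold circleCoupling
    split_ifs <;> simp only [Pi.add_apply, Pi.single_apply] <;> split_ifs <;> norm_num
  · rw [tsum_fintype]; exact circleCoupling_sum_fst hn y hx
  · rw [tsum_fintype]; exact circleCoupling_sum_snd hn x hy
  · have hne : ∀ a : ZMod n, w ≠ (a, a) := by rintro a rfl; exact hw rfl
    simp [circleCoupling, hne]

theorem circleCoupling_drift (hn : 3 ≤ n) {x y : ZMod n} (hxy : x ≠ y) :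
    ∑ w, circleCoupling n (x, y) w * (sinDist n (w.1 - w.2) - sinDist n (x - y)) =
      -(1 - Real.cos (2 * π / n)) * sinDist n (x - y) := by
  have h2π : 2 * π / n = 2 * (π / n) := mul_div_assoc _ _ _
  unfold circleCoupling
  rw [if_neg hxy]
  split_ifs with hnb
  · simp only [Pi.add_apply, add_mul, sum_add_distrib, sum_pi_single_mul, sub_self, sinDist_zero]
    have h1 : sinDist n 1 = Real.sin (π / n) := by
      simpa using sinDist_natCast (n := n) (k := 1) (by omega)
    have h3 : sinDist n 3 = Real.sin (3 * (π / n)) := by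
      simpa [mul_div_assoc] using sinDist_natCast (n := n) (k := 3) hn
    rw [show 2 * x - y - (2 * y - x) = 3 * (x - y) by ring]
    obtain hδ | hδ : x - y = -1 ∨ x - y = 1 :=
      hnb.imp (fun h => by linear_combination -h) id
    all_goals
      rw [hδ]
      simp only [mul_neg, mul_one, sinDist_neg, h1, h3, h2π]
      linear_combination sin_three_mul_div_two_sub (π / n)
  · simp only [Pi.add_apply, add_mul, sum_add_distrib, sum_pi_single_mul]
    rw [show x + 1 - (y - 1) = x - y + 2 by ring, show x - 1 - (y + 1) = x - y - 2 by ring]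
    obtain ⟨hlo, hhi⟩ := ZMod.two_le_val_and_val_add_two_le (sub_ne_zero.mpr hxy)
      (fun h => hnb (Or.inr h)) (fun h => hnb (Or.inl (by linear_combination -h)))
    linear_combination sinDist_add_two_add_sinDist_sub_two hlo hhi / 2

theorem jumpGenerator_circleJump (hn : 3 ≤ n) :
    jumpGenerator (circleJump n) = fun x y : ZMod n =>
      if y = x + 1 ∨ y = x - 1 then 1 / 2 else if y = x then -1 else 0 := by
  ext x y
  obtain rfl | hxy := eq_or_ne y x
  · have h1 : (1 : ZMod n) ≠ 0 := by
      exact_mod_cast ZMod.natCast_ne_zero_of_lt (k := 1) one_pos (by omega)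
    have hx1 : y ≠ y + 1 := fun h => h1 (by linear_combination -h)
    have hx2 : y ≠ y - 1 := fun h => h1 (by linear_combination h)
    simp only [jumpGenerator, Matrix.sub_apply, of_apply, diagonal_apply_eq, circleJump_eq hn,
      Pi.add_apply, sum_add_distrib, sum_pi_single', mem_univ, if_true, Pi.single_eq_of_ne hx1,
      Pi.single_eq_of_ne hx2, if_neg (not_or.mpr ⟨hx1, hx2⟩)]
    norm_num
  · rw [jumpGenerator_apply_of_ne _ (Ne.symm hxy)]
    simp [circleJump, hxy]

end Circle

/-- On the discrete circle `ℤ/nℤ` (`n ≥ 3`) with Laplacian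
`Δf(x) = ½(f(x+1) + f(x-1)) - f(x)`, graph metric `d_G`, and the modified metric
`d(x,y) = sin (d_G(x,y) π / n)`: there is a coupling generator `Δ^π` with
`Δ^π d ≤ -(1 - cos (2π/n)) d`, and consequently
`W₁(P_t(x,·),P_t(y,·)) ≤ e^{-(1 - cos(2π/n)) t} d(x,y)`, the sharp rate
`λ₁ = 1 - cos (2π/n)`. -/
theorem stmt13 (n : ℕ) [NeZero n] (hn : 3 ≤ n) :
    let Δ : Matrix (ZMod n) (ZMod n) ℝ := fun x y =>
      if y = x + 1 ∨ y = x - 1 then 1 / 2 else if y = x then -1 else 0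
    let J : ZMod n → ZMod n → ℝ := fun x y => if y = x + 1 ∨ y = x - 1 then 1 / 2 else 0
    let d : ZMod n → ZMod n → ℝ := fun x y =>
      Real.sin ((min (x - y).val (y - x).val : ℕ) * Real.pi / n)
    let κ : ℝ := 1 - Real.cos (2 * Real.pi / n)
    (∃ Jπ : (ZMod n × ZMod n) → (ZMod n × ZMod n) → ℝ, IsCouplingKernel J Jπ ∧
      ∀ x y : ZMod n, x ≠ y →
        ∑' w : ZMod n × ZMod n, Jπ (x, y) w * (d w.1 w.2 - d x y) ≤ -κ * d x y) ∧
    ∀ t : ℝ, 0 ≤ t → ∀ x y : ZMod n,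
      Tcost d (NormedSpace.exp (t • Δ) x) (NormedSpace.exp (t • Δ) y) ≤
        Real.exp (-κ * t) * d x y := by
  intro Δ J d κ
  have hd : ∀ x y, d x y = sinDist n (x - y) := sin_min_val_eq_sinDist
  have hK : IsCouplingKernel J (circleCoupling n) := isCouplingKernel_circleCoupling hn
  have hdrift : ∀ x y : ZMod n, x ≠ y →
      ∑' w, circleCoupling n (x, y) w * (d w.1 w.2 - d x y) ≤ -κ * d x y := by
    intro x y hxy
    simp only [hd, tsum_fintype]
    exact (circleCoupling_drift hn hxy).le
  refine ⟨⟨circleCoupling n, hK, hdrift⟩, fun t ht x y => ?_⟩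
  rw [show Δ = jumpGenerator J from (jumpGenerator_circleJump hn).symm]
  exact hK.tcost_exp_le (fun a b => hd a b ▸ sinDist_nonneg _)
    (fun a => by rw [hd, sub_self, sinDist_zero]) hdrift ht x y
end

section
/- Let h : ℝ → ℝ, h(x) = sin(xπ/n) with n ≥ 3. Define on k ∈ {1,...,D_G} (D_G = ⌊n/2⌋) the operator L_ref h(k) = Σ_{j=-2}^{2} (h(k+j)-h(k))·J_k(k+j) with rates: J_1(0)=1, J_1(3)=1/2; J_k(k±2)=1/2 for 2 ≤ k ≤ D_G-2; and at k = D_G-1, D_G the rates given by the reflection coupling on ℤ/nℤ (for n even: J_{D_G-1}(D_G-3)=1/2, J_{D_G-1}(D_G-1)=1/2, J_{D_G}(D_G-2)=1; for n odd: J_{D_G-1}(D_G-3)=1/2, J_{D_G-1}(D_G)=1/2, J_{D_G}(D_G-1)=1/2, J_{D_G}(D_G-2)=1/2). Then L_ref h(k) = -(1-cos(2π/n)) h(k) for all 1 ≤ k ≤ D_G. -/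
/-- The eigenvalue computation for the reference chain of the reflection coupling
on the discrete circle `ℤ/nℤ` (`n ≥ 3`): for `h(x) = sin (xπ/n)` (defined on all
of `ℝ`), `D_G = ⌊n/2⌋` and `λ₁ = 1 - cos (2π/n)`, one has
`L_ref h(k) = -λ₁ h(k)` for all `1 ≤ k ≤ D_G`, where the rates are:
`J_1(0)=1, J_1(3)=1/2`; `J_k(k±2)=1/2` for `2 ≤ k ≤ D_G - 2`; and at
`k = D_G - 1, D_G` the reflection-coupling rates (depending on the parity of `n`). -/
theorem stmt14 (n : ℕ) (hn : 3 ≤ n) :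
    let h : ℝ → ℝ := fun x => Real.sin (x * Real.pi / n)
    let D : ℝ := (n / 2 : ℕ)
    let lam : ℝ := 1 - Real.cos (2 * Real.pi / n)
    ((h 0 - h 1) + (1 / 2) * (h 3 - h 1) = -lam * h 1) ∧
    (∀ k : ℕ, 2 ≤ k → (k : ℝ) ≤ D - 2 →
      (1 / 2) * (h ((k : ℝ) - 2) - h k) + (1 / 2) * (h ((k : ℝ) + 2) - h k) =
        -lam * h k) ∧
    (Even n →
      (1 / 2) * (h (D - 3) - h (D - 1)) = -lam * h (D - 1) ∧
      (h (D - 2) - h D) = -lam * h D) ∧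
    (Odd n →
      (1 / 2) * (h (D - 3) - h (D - 1)) + (1 / 2) * (h D - h (D - 1)) =
        -lam * h (D - 1) ∧
      (1 / 2) * (h (D - 1) - h D) + (1 / 2) * (h (D - 2) - h D) = -lam * h D) := by
  intro h D lam
  have hn0 : (n : ℝ) ≠ 0 := by positivity
  have key : ∀ x : ℝ,
      (1 / 2) * (h (x - 2) - h x) + (1 / 2) * (h (x + 2) - h x) = -lam * h x := by
    intro x
    show (1 / 2) * (Real.sin ((x - 2) * Real.pi / n) - Real.sin (x * Real.pi / n))
        + (1 / 2) * (Real.sin ((x + 2) * Real.pi / n) - Real.sin (x * Real.pi / n))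
        = -(1 - Real.cos (2 * Real.pi / n)) * Real.sin (x * Real.pi / n)
    have e1 : (x - 2) * Real.pi / n = x * Real.pi / n - 2 * Real.pi / n := by ring
    have e2 : (x + 2) * Real.pi / n = x * Real.pi / n + 2 * Real.pi / n := by ring
    rw [e1, e2, Real.sin_sub, Real.sin_add]
    ring
  have sym : ∀ x : ℝ, h ((n : ℝ) - x) = h x := by
    intro x
    show Real.sin (((n : ℝ) - x) * Real.pi / n) = Real.sin (x * Real.pi / n)
    have e : ((n : ℝ) - x) * Real.pi / n = Real.pi - x * Real.pi / n := by
      field_simp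
    rw [e, Real.sin_pi_sub]
  refine ⟨?_, ?_, ?_, ?_⟩
  · have h0 : h 0 = 0 := by
      show Real.sin (0 * Real.pi / n) = 0
      norm_num
    have hneg : h (-1) = -h 1 := by
      show Real.sin ((-1) * Real.pi / n) = -Real.sin (1 * Real.pi / n)
      rw [show (-1 : ℝ) * Real.pi / n = -(1 * Real.pi / n) by ring, Real.sin_neg]
    have := key 1
    norm_num at this
    linear_combination this + h0 - (1 / 2) * hneg
  · intro k _ _
    exact key (k : ℝ)
  · intro hev
    obtain ⟨m, hm⟩ := hev
    have hDm : D = (m : ℝ) := by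
      simp only [D, hm]; norm_num [Nat.mul_div_cancel_left]
      omega
    have hnr : (n : ℝ) = 2 * m := by rw [hm]; push_cast; ring
    have s1 : h (D + 1) = h (D - 1) := by
      rw [hDm]
      have := sym ((m : ℝ) - 1)
      rwa [hnr, show 2 * (m : ℝ) - ((m : ℝ) - 1) = (m : ℝ) + 1 by ring] at this
    have s2 : h (D + 2) = h (D - 2) := by
      rw [hDm]
      have := sym ((m : ℝ) - 2)
      rwa [hnr, show 2 * (m : ℝ) - ((m : ℝ) - 2) = (m : ℝ) + 2 by ring] at this
    constructor
    · have := key (D - 1)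
      rw [show D - 1 - 2 = D - 3 by ring, show D - 1 + 2 = D + 1 by ring, s1] at this
      linear_combination this
    · have := key D
      rw [s2] at this
      linear_combination this
  · intro hodd
    obtain ⟨m, hm⟩ := hodd
    have hDm : D = (m : ℝ) := by
      simp only [D, hm]; congr 1; omega
    have hnr : (n : ℝ) = 2 * m + 1 := by rw [hm]; push_cast; ring
    have s1 : h (D + 1) = h D := by
      rw [hDm]
      have := sym ((m : ℝ) + 1)
      rw [hnr, show 2 * (m : ℝ) + 1 - ((m : ℝ) + 1) = (m : ℝ) by ring] at this
      exact this.symm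
    have s2 : h (D + 2) = h (D - 1) := by
      rw [hDm]
      have := sym ((m : ℝ) + 2)
      rw [hnr, show 2 * (m : ℝ) + 1 - ((m : ℝ) + 2) = (m : ℝ) - 1 by ring] at this
      exact this.symm
    constructor
    · have := key (D - 1)
      rw [show D - 1 - 2 = D - 3 by ring, show D - 1 + 2 = D + 1 by ring, s1] at this
      linear_combination this
    · have := key D
      rw [s2] at this
      linear_combination this
end

section
/- Consider the birth-death reference generator on [0,D_G]∩ℕ with constant rates a < b (death rate a, birth rate b, birth rate 0 at D_G), killed at 0. Let h₀ be defined by h₀(0)=0 and h₀(n)-h₀(n-1) = ((b/a)^{D_G-n+1} - 1)/(b-a). Then -L_ref h₀(n) = 1 for all 1 ≤ n ≤ D_G, h₀ is increasing with decreasing increments, and -L_ref h₀(n) ≥ h₀(n)/h₀(D_G) for all 1 ≤ n ≤ D_G, where h₀(D_G) = (b((b/a)^{D_G} - 1) - D_G(b-a))/(b-a)². -/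
/-- For the birth-death reference generator on `[0,D_G] ∩ ℕ` with constant death
rate `a` and birth rate `b`, `a < b` (birth rate `0` at `D_G`), killed at `0`:
the function `h₀` with `h₀(0) = 0` and increments
`h₀(n) - h₀(n-1) = ((b/a)^{D_G - n + 1} - 1)/(b - a)` satisfies
`-L_ref h₀(n) = 1` for `1 ≤ n ≤ D_G`, is increasing with decreasing increments,
satisfies `-L_ref h₀(n) ≥ h₀(n)/h₀(D_G)`, and
`h₀(D_G) = (b((b/a)^{D_G} - 1) - D_G (b-a))/(b-a)²`. -/
theorem stmt16 (a b : ℝ) (ha : 0 < a) (hab : a < b) (D : ℕ) (hD : 1 ≤ D) :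
    let h₀ : ℕ → ℝ := fun m => ∑ k ∈ Finset.range m, ((b / a) ^ (D - k) - 1) / (b - a)
    let Lref : (ℕ → ℝ) → ℕ → ℝ := fun f n =>
      a * (f (n - 1) - f n) + (if n < D then b else 0) * (f (n + 1) - f n)
    (∀ n : ℕ, 1 ≤ n → n ≤ D → -Lref h₀ n = 1) ∧
    (∀ n : ℕ, 1 ≤ n → n ≤ D → 0 < h₀ n - h₀ (n - 1)) ∧
    (∀ n : ℕ, 1 ≤ n → n + 1 ≤ D → h₀ (n + 1) - h₀ n ≤ h₀ n - h₀ (n - 1)) ∧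
    (∀ n : ℕ, 1 ≤ n → n ≤ D → h₀ n / h₀ D ≤ -Lref h₀ n) ∧
    h₀ D = (b * ((b / a) ^ D - 1) - D * (b - a)) / (b - a) ^ 2 := by
  intro h₀ Lref
  have ha' : a ≠ 0 := ne_of_gt ha
  have hb : 0 < b := ha.trans hab
  have hba : (0:ℝ) < b - a := sub_pos.2 hab
  have hba' : b - a ≠ 0 := ne_of_gt hba
  have hr : (1:ℝ) < b / a := (one_lt_div ha).2 hab
  have key : ∀ m, h₀ (m+1) - h₀ m = ((b/a)^(D-m) - 1)/(b-a) := by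
    intro m; simp [h₀, Finset.sum_range_succ]
  have tpos : ∀ k, k < D → 0 < ((b/a)^(D-k) - 1)/(b-a) := by
    intro k hk
    apply div_pos _ hba
    have : (1:ℝ) < (b/a)^(D-k) := one_lt_pow₀ hr (by omega)
    linarith
  have tnonneg : ∀ k : ℕ, 0 ≤ ((b/a)^(D-k) - 1)/(b-a) := by
    intro k
    apply div_nonneg _ hba.le
    have h := pow_le_pow_right₀ hr.le (Nat.zero_le (D-k))
    rw [pow_zero] at h
    linarith
  have part1 : ∀ n : ℕ, 1 ≤ n → n ≤ D → -Lref h₀ n = 1 := by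
    intro n h1 h2
    obtain ⟨m, rfl⟩ : ∃ m, n = m + 1 := ⟨n-1, by omega⟩
    by_cases hlt : m + 1 < D
    · have e1 : h₀ (m+1) - h₀ m = ((b/a)^(D-m) - 1)/(b-a) := key m
      have e2 : h₀ (m+1+1) - h₀ (m+1) = ((b/a)^(D-(m+1)) - 1)/(b-a) := key (m+1)
      have e3 : (b/a)^(D-m) = (b/a)^(D-(m+1)) * (b/a) := by
        rw [← pow_succ]; congr 1; omega
      have goal_eq : a*(h₀ (m+1) - h₀ m) - b*(h₀ (m+1+1) - h₀ (m+1)) = 1 := by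
        rw [e1, e2, e3]
        field_simp
        ring
      simp only [Lref, if_pos hlt, Nat.add_sub_cancel]
      linarith
    · have e1 : h₀ (m+1) - h₀ m = ((b/a)^(D-m) - 1)/(b-a) := key m
      have e4 : D - m = 1 := by omega
      rw [e4, pow_one] at e1
      have goal_eq : a*(h₀ (m+1) - h₀ m) = 1 := by
        rw [e1]; field_simp
      simp only [Lref, if_neg hlt, Nat.add_sub_cancel, zero_mul, add_zero]
      linarith
  have part2 : ∀ n : ℕ, 1 ≤ n → n ≤ D → 0 < h₀ n - h₀ (n - 1) := by
    intro n h1 h2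
    obtain ⟨m, rfl⟩ : ∃ m, n = m + 1 := ⟨n-1, by omega⟩
    simp only [Nat.add_sub_cancel]
    rw [key m]
    exact tpos m (by omega)
  have part3 : ∀ n : ℕ, 1 ≤ n → n + 1 ≤ D → h₀ (n + 1) - h₀ n ≤ h₀ n - h₀ (n - 1) := by
    intro n h1 h2
    obtain ⟨m, rfl⟩ : ∃ m, n = m + 1 := ⟨n-1, by omega⟩
    rw [key (m+1)]
    simp only [Nat.add_sub_cancel]
    rw [key m]
    apply div_le_div_of_nonneg_right _ hba.le
    have : (b/a)^(D-(m+1)) ≤ (b/a)^(D-m) :=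
      pow_le_pow_right₀ hr.le (by omega)
    linarith
  have hmono : ∀ n : ℕ, n ≤ D → h₀ n ≤ h₀ D := by
    intro n hn
    apply Finset.sum_le_sum_of_subset_of_nonneg (Finset.range_subset_range.2 hn)
    intro k _ _
    exact tnonneg k
  have hDpos : 0 < h₀ D := by
    have h1 : h₀ 1 = ((b/a)^(D-0) - 1)/(b-a) := by
      simp [h₀, Finset.sum_range_one]
    have := tpos 0 (by omega)
    have := hmono 1 hD
    linarith [h1 ▸ this]
  have part4 : ∀ n : ℕ, 1 ≤ n → n ≤ D → h₀ n / h₀ D ≤ -Lref h₀ n := by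
    intro n h1 h2
    rw [part1 n h1 h2]
    exact div_le_one_of_le₀ (hmono n h2) hDpos.le
  refine ⟨part1, part2, part3, part4, ?_⟩
  have hrne : (b/a) - 1 ≠ 0 := sub_ne_zero.2 hr.ne'
  have sum1 : ∑ k ∈ Finset.range D, ((b/a):ℝ)^(D-k)
      = (b/a) * (((b/a)^D - 1)/((b/a) - 1)) := by
    have hreflect := Finset.sum_range_reflect (fun k => ((b/a):ℝ)^(k+1)) D
    have hcongr : ∑ k ∈ Finset.range D, ((b/a):ℝ)^(D-k)
        = ∑ k ∈ Finset.range D, ((b/a):ℝ)^((D - 1 - k) + 1) := by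
      apply Finset.sum_congr rfl
      intro k hk
      rw [Finset.mem_range] at hk
      congr 1
      omega
    rw [hcongr, hreflect]
    rw [show (∑ k ∈ Finset.range D, ((b/a):ℝ)^(k+1)) = (b/a) * ∑ k ∈ Finset.range D, ((b/a):ℝ)^k by
      rw [Finset.mul_sum]; apply Finset.sum_congr rfl; intro k _; ring]
    rw [geom_sum_eq (ne_of_gt hr) D]
  have hsum : h₀ D = ((∑ k ∈ Finset.range D, ((b/a):ℝ)^(D-k)) - D) / (b-a) := by
    simp only [h₀]
    rw [← Finset.sum_div, Finset.sum_sub_distrib, Finset.sum_const, Finset.card_range,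
      nsmul_eq_mul, mul_one]
  rw [hsum, sum1]
  field_simp
end

section
/- Let λ₀ be the smallest eigenvalue of -L_ref on {1,...,D_G} with Dirichlet condition at 0, where L_ref has death rate a and birth rate b with a < b. Then λ₀ ≤ (b-a)/((b/a)^{D_G} - 1). -/
/-!
The birth–death generator is reversible with respect to the weights `π n = (b / a) ^ n`, so
conjugating `-L_ref` by the diagonal matrix `√(b / a) ^ n` gives a symmetric matrix with the same
Dirichlet eigenvalues. Its smallest eigenvalue is bounded by the Rayleigh quotient of any test
vector. For the test function `1` on `{1, …, D}` the Dirichlet form is `a * π 1 = b` and the mass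
is `∑ n ∈ [1, D], π n`, whose ratio is exactly `(b - a) / ((b / a) ^ D - 1)`.
-/

open Module.End Matrix

theorem LinearMap.IsSymmetric.exists_hasEigenvalue_le_rayleigh {𝕜 E : Type*} [RCLike 𝕜]
    [NormedAddCommGroup E] [InnerProductSpace 𝕜 E] [FiniteDimensional 𝕜 E] {T : E →ₗ[𝕜] E}
    (hT : T.IsSymmetric) {x : E} (hx : x ≠ 0) :
    ∃ μ : ℝ, HasEigenvalue T μ ∧ μ ≤ RCLike.re (inner 𝕜 (T x) x) / ‖x‖ ^ 2 := by
  have : Nontrivial E := ⟨⟨x, 0, hx⟩⟩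
  refine ⟨_, hT.hasEigenvalue_iInf_of_finiteDimensional,
    ciInf_le ⟨-‖T.toContinuousLinearMap‖, ?_⟩ (⟨x, hx⟩ : {x : E // x ≠ 0})⟩
  rintro _ ⟨y, rfl⟩
  exact neg_le_of_abs_le (T.toContinuousLinearMap.rayleighQuotient_le_norm y)

theorem Matrix.IsHermitian.exists_mulVec_eq_smul_le_rayleigh {n : Type*} [Fintype n]
    [DecidableEq n] {A : Matrix n n ℝ} (hA : A.IsHermitian) {x : n → ℝ} (hx : x ≠ 0) :
    ∃ μ : ℝ, (∃ v ≠ 0, A *ᵥ v = μ • v) ∧ μ ≤ x ⬝ᵥ (A *ᵥ x) / (x ⬝ᵥ x) := by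
  obtain ⟨μ, hμ, hle⟩ := (isSymmetric_toEuclideanLin_iff.mpr hA).exists_hasEigenvalue_le_rayleigh
    (x := WithLp.toLp 2 x) (by simpa using hx)
  obtain ⟨v, hv⟩ := hμ.exists_hasEigenvector
  refine ⟨μ, ⟨v.ofLp, by simpa using hv.2, ?_⟩, ?_⟩
  · simpa using congrArg WithLp.ofLp hv.apply_eq_smul
  · simpa only [← real_inner_self_eq_norm_sq, toLpLin_toLp, toLin'_apply,
      EuclideanSpace.inner_toLp_toLp, RCLike.re_to_real, star_trivial] using hle

theorem Real.sqrt_mul_eq_mul_sqrt_div {a b : ℝ} (ha : 0 < a) : √(a * b) = a * √(b / a) := by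
  rw [show a * b = a ^ 2 * (b / a) by field_simp, Real.sqrt_mul (sq_nonneg a), Real.sqrt_sq ha.le]

namespace BirthDeath

def generator (a b : ℝ) (D : ℕ) (g : ℕ → ℝ) (k : ℕ) : ℝ :=
  a * (g (k - 1) - g k) + (if k < D then b else 0) * (g (k + 1) - g k)

def dirichletSpectrum (a b : ℝ) (D : ℕ) : Set ℝ :=
  {μ | ∃ g : ℕ → ℝ, g 0 = 0 ∧ (∃ k, 1 ≤ k ∧ k ≤ D ∧ g k ≠ 0) ∧
    ∀ k : ℕ, 1 ≤ k → k ≤ D → generator a b D g k = -μ * g k}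

section extend

variable {D : ℕ} (u : Fin D → ℝ)

/-- The coordinate `u i` sits at site `i + 1`; the function vanishes at the Dirichlet site `0`
and beyond `D`. -/
def extend (n : ℕ) : ℝ := if h : n ≠ 0 ∧ n ≤ D then u ⟨n - 1, by omega⟩ else 0

@[simp] lemma extend_zero : extend u 0 = 0 := by simp [extend]

@[simp] lemma extend_succ (i : Fin D) : extend u (i + 1) = u i := by simp [extend]

lemma extend_of_lt {n : ℕ} (hn : D < n) : extend u n = 0 := by
  simp [extend]; omega

lemma sum_ite_succ_eq_extend (n : ℕ) :
    ∑ j : Fin D, (if (j : ℕ) + 1 = n then u j else 0) = extend u n := by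
  by_cases hn : n ≠ 0 ∧ n ≤ D
  · rw [Finset.sum_eq_single_of_mem (⟨n - 1, by omega⟩ : Fin D) (Finset.mem_univ _)]
    · simp [extend, hn, Nat.sub_add_cancel (Nat.one_le_iff_ne_zero.2 hn.1)]
    · intro j _ hj
      rw [if_neg]
      exact fun h => hj (Fin.ext (by simp; omega))
  · rw [extend, dif_neg hn, Finset.sum_eq_zero]
    intro j _
    rw [if_neg]
    omega

end extend

variable {a b : ℝ} {D : ℕ}

lemma generator_indicator {k : ℕ} (hk1 : 1 ≤ k) (hkD : k ≤ D) :
    generator a b D (fun n => if n ≠ 0 ∧ n ≤ D then 1 else 0) k = if k = 1 then -a else 0 := by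
  unfold generator
  dsimp only
  split_ifs <;> first | omega | simp

/-- `-generator a b D` conjugated by the diagonal matrix `√(b / a) ^ n` on the sites `n`. -/
noncomputable def symmGenerator (a b : ℝ) (D : ℕ) : Matrix (Fin D) (Fin D) ℝ :=
  Matrix.of fun i j => (if i = j then a + (if (i : ℕ) + 1 < D then b else 0) else 0)
    - (if (j : ℕ) = i + 1 then √(a * b) else 0) - (if (j : ℕ) + 1 = i then √(a * b) else 0)

lemma isHermitian_symmGenerator : (symmGenerator a b D).IsHermitian := by
  refine IsHermitian.ext fun i j => ?_
  simp only [symmGenerator, of_apply, star_trivial]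
  by_cases hij : i = j
  · subst hij; rfl
  · rw [if_neg hij, if_neg (Ne.symm hij)]
    split_ifs <;> first | omega | ring

lemma symmGenerator_mulVec (u : Fin D → ℝ) (i : Fin D) :
    (symmGenerator a b D *ᵥ u) i = (a + (if (i : ℕ) + 1 < D then b else 0)) * extend u (i + 1)
      - √(a * b) * extend u (i + 2) - √(a * b) * extend u i := by
  simp only [mulVec, dotProduct, symmGenerator, of_apply, sub_mul, ite_mul, zero_mul,
    Finset.sum_sub_distrib, Finset.sum_ite_eq, Finset.mem_univ, if_true, extend_succ,
    ← mul_ite_zero, ← Finset.mul_sum, sum_ite_succ_eq_extend]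
  congr 3
  exact (Finset.sum_congr rfl fun j _ => if_congr (by omega) rfl rfl).trans
    (sum_ite_succ_eq_extend u _)

lemma symmGenerator_mulVec_eq_generator (ha : 0 < a) (hb : 0 < b) (u : Fin D → ℝ) (i : Fin D) :
    (symmGenerator a b D *ᵥ u) i =
      -(√(b / a) ^ ((i : ℕ) + 1)) *
        generator a b D (fun n => extend u n / √(b / a) ^ n) (i + 1) := by
  rw [symmGenerator_mulVec, Real.sqrt_mul_eq_mul_sqrt_div ha, generator, Nat.add_sub_cancel,
    show (i : ℕ) + 1 + 1 = i + 2 by ring]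
  set s := √(b / a)
  have hs : 0 < s := Real.sqrt_pos.2 (div_pos hb ha)
  have hss : a * s ^ 2 = b := by
    rw [Real.sq_sqrt (div_pos hb ha).le]; field_simp
  split_ifs with hi
  · field_simp
    linear_combination (-(extend u (i + 2) * s ^ (2 * (i : ℕ)) * s)) * hss
  · rw [extend_of_lt u (n := i + 2) (by have := i.isLt; omega)]
    field_simp
    ring

lemma mem_dirichletSpectrum_of_mulVec_eq_smul (ha : 0 < a) (hb : 0 < b) {μ : ℝ}
    {v : Fin D → ℝ} (hv : v ≠ 0) (hμ : symmGenerator a b D *ᵥ v = μ • v) :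
    μ ∈ dirichletSpectrum a b D := by
  have hs : 0 < √(b / a) := Real.sqrt_pos.2 (div_pos hb ha)
  refine ⟨fun n => extend v n / √(b / a) ^ n, by simp, ?_, fun k hk1 hkD => ?_⟩
  · obtain ⟨i, hi⟩ := Function.ne_iff.mp hv
    exact ⟨i + 1, by omega, i.isLt, by simpa [hs.ne'] using hi⟩
  · obtain ⟨i, rfl⟩ : ∃ i : Fin D, (i : ℕ) + 1 = k := ⟨⟨k - 1, by omega⟩, by simp; omega⟩
    have key := symmGenerator_mulVec_eq_generator ha hb v i
    rw [hμ, Pi.smul_apply, smul_eq_mul] at key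
    simp only [extend_succ]
    field_simp
    linarith

/-- The conjugate of the test function `1` on `{1, …, D}`. -/
noncomputable def testVector (a b : ℝ) (D : ℕ) : Fin D → ℝ := fun j => √(b / a) ^ ((j : ℕ) + 1)

lemma symmGenerator_mulVec_testVector (ha : 0 < a) (hb : 0 < b) (i : Fin D) :
    (symmGenerator a b D *ᵥ testVector a b D) i = if (i : ℕ) = 0 then a * √(b / a) else 0 := by
  have hs : 0 < √(b / a) := Real.sqrt_pos.2 (div_pos hb ha)
  have hind : (fun n => extend (testVector a b D) n / √(b / a) ^ n)
      = fun n => if n ≠ 0 ∧ n ≤ D then 1 else 0 := by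
    funext n
    unfold extend
    split_ifs with hn
    · rw [testVector, Nat.sub_add_cancel (Nat.one_le_iff_ne_zero.2 hn.1),
        div_self (pow_pos hs n).ne']
    · exact zero_div _
  rw [symmGenerator_mulVec_eq_generator ha hb, hind, generator_indicator (by omega) i.isLt]
  split_ifs <;> simp_all [mul_comm]

lemma testVector_dotProduct_mulVec (ha : 0 < a) (hb : 0 < b) (hD : 0 < D) :
    testVector a b D ⬝ᵥ (symmGenerator a b D *ᵥ testVector a b D) = b := by
  rw [dotProduct, Fintype.sum_eq_single ⟨0, hD⟩ fun i hi => ?_,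
    symmGenerator_mulVec_testVector ha hb]
  · simp only [testVector, zero_add, pow_one, if_pos]
    rw [mul_left_comm, Real.mul_self_sqrt (div_pos hb ha).le, mul_div_cancel₀ _ ha.ne']
  · rw [symmGenerator_mulVec_testVector ha hb, if_neg (fun h => hi (Fin.ext h)), mul_zero]

lemma testVector_dotProduct_self (ha : 0 < a) (hb : 0 < b) (hab : a ≠ b) :
    testVector a b D ⬝ᵥ testVector a b D = b / a * (((b / a) ^ D - 1) / (b / a - 1)) := by
  have hq : b / a ≠ 1 := by rwa [ne_eq, div_eq_one_iff_eq ha.ne', eq_comm]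
  simp only [dotProduct, testVector, ← mul_pow, Real.mul_self_sqrt (div_pos hb ha).le]
  rw [Fin.sum_univ_eq_sum_range (fun i => (b / a) ^ (i + 1)), ← geom_sum_eq hq, Finset.mul_sum]
  simp only [pow_succ, mul_comm]

theorem exists_mem_dirichletSpectrum_le (ha : 0 < a) (hab : a < b) (hD : 0 < D) :
    ∃ μ ∈ dirichletSpectrum a b D, μ ≤ (b - a) / ((b / a) ^ D - 1) := by
  have hb : 0 < b := ha.trans hab
  have hx : testVector a b D ≠ 0 := Function.ne_iff.mpr
    ⟨⟨0, hD⟩, pow_ne_zero _ (Real.sqrt_pos.2 (div_pos hb ha)).ne'⟩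
  obtain ⟨μ, ⟨v, hv, hμ⟩, hle⟩ :=
    IsHermitian.exists_mulVec_eq_smul_le_rayleigh isHermitian_symmGenerator hx
  refine ⟨μ, mem_dirichletSpectrum_of_mulVec_eq_smul ha hb hv hμ, hle.trans_eq ?_⟩
  have hq : 1 < b / a := (one_lt_div ha).2 hab
  have : (b / a) ^ D - 1 ≠ 0 := (sub_pos.2 (one_lt_pow₀ hq hD.ne')).ne'
  rw [testVector_dotProduct_mulVec ha hb hD, testVector_dotProduct_self ha hb hab.ne]
  field_simp

end BirthDeath

/-- Let `λ₀` be the smallest eigenvalue of `-L_ref` on `{1,…,D_G}` with Dirichlet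
condition at `0`, where `L_ref` has constant death rate `a` and birth rate `b`
with `a < b` (birth rate `0` at `D_G`). Then `λ₀ ≤ (b-a)/((b/a)^{D_G} - 1)`. -/
theorem stmt17 (a b : ℝ) (ha : 0 < a) (hab : a < b) (D : ℕ) (hD : 1 ≤ D) (lam0 : ℝ)
    (hleast : IsLeast {μ : ℝ | ∃ g : ℕ → ℝ, g 0 = 0 ∧ (∃ k, 1 ≤ k ∧ k ≤ D ∧ g k ≠ 0) ∧
      ∀ k : ℕ, 1 ≤ k → k ≤ D →
        a * (g (k - 1) - g k) + (if k < D then b else 0) * (g (k + 1) - g k) =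
          -μ * g k} lam0) :
    lam0 ≤ (b - a) / ((b / a) ^ D - 1) := by
  obtain ⟨μ, hμ, hμle⟩ := BirthDeath.exists_mem_dirichletSpectrum_le ha hab hD
  exact (hleast.2 hμ).trans hμle
end

section
/- On a finite graph (S,E) with graph diameter D_G ≥ 2, let L be a nearest-neighbor generator with minimal total jump rate λ* = inf_x λ(x) > 0 and maximal degree d_L = sup_x max_{y~x} λ(x)/J(x,y) > 2. Then every nonzero eigenvalue λ of -L (in ℂ) satisfies Re(λ) ≥ 2λ*(d_L - 2)/(d_L·(Σ_{k=1}^{D_G}(d_L - 1)^k - D_G)). -/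
/-!
Put `ρ(x, y) := r (d(x, y))` with `r n := δ₁ + ⋯ + δₙ` and
`δ_k := ((d_L - 1)^(D + 1 - k) - 1) / (d_L - 2)`, so that `(d_L - 1) δ_{n+1} = δ_n - 1`. In this
metric the birth–death chain on `{0, …, D}` with rates `a = 2λ*/d_L` down and
`b = 2λ*(d_L - 1)/d_L` up has drift exactly `-a`. The neighbour of `x` on a geodesic to `y` carries
rate at least `λ(x)/d_L`, so moving `x` alone decreases `ρ(x, y)` at rate at least `λ*/d_L`; under
the independent coupling `ρ(x, y)` therefore decreases at rate at least `2λ*/d_L ≥ κ ρ(x, y)`, where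
`κ = 2λ*/(d_L r(D))` is the claimed bound. Comparing the eigenvalue equation at the two ends of a
pair maximising `|f x - f y| / ρ(x, y)` turns this contraction into `Re μ ≥ κ`.
-/

open Finset
open scoped InnerProductSpace

section Coupling

variable {S : Type*} [Fintype S]

def independentCouplingGenerator (J ρ : S → S → ℝ) (x y : S) : ℝ :=
  ∑ z, J x z * (ρ z y - ρ x y) + ∑ z, J y z * (ρ x z - ρ x y)

lemma exists_ne_of_eigenfunction {J : S → S → ℝ} {μ : ℂ} (hμ : μ ≠ 0) {f : S → ℂ} (hf : f ≠ 0)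
    (hev : ∀ x, -(∑ y, (J x y : ℂ) * (f y - f x)) = μ * f x) : ∃ a b, f a ≠ f b := by
  by_contra! hconst
  refine hf (funext fun x => ?_)
  have hx := hev x
  simp only [hconst _ x, sub_self, mul_zero, sum_const_zero, neg_zero] at hx
  exact (mul_eq_zero.1 hx.symm).resolve_left hμ

lemma exists_pair_maximizing_norm_sub_div {E : Type*} [NormedAddCommGroup E] {ρ : S → S → ℝ}
    (hρ_nonneg : ∀ x y, 0 ≤ ρ x y) (hρ_pos : ∀ x y, x ≠ y → 0 < ρ x y) (f : S → E) {a b : S}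
    (hab : f a ≠ f b) :
    ∃ M x y, 0 < M ∧ f x ≠ f y ∧ ‖f x - f y‖ = M * ρ x y ∧ ∀ v w, ‖f v - f w‖ ≤ M * ρ v w := by
  have hne : ∀ {v w}, f v ≠ f w → v ≠ w := fun h e => h (e ▸ rfl)
  obtain ⟨⟨x, y⟩, -, hmax⟩ := exists_max_image univ
    (fun p : S × S => ‖f p.1 - f p.2‖ / ρ p.1 p.2) ⟨(a, b), mem_univ _⟩
  have hM : 0 < ‖f x - f y‖ / ρ x y :=
    (div_pos (norm_pos_iff.2 (sub_ne_zero.2 hab)) (hρ_pos a b (hne hab))).trans_le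
      (hmax (a, b) (mem_univ _))
  have hxy : f x ≠ f y := fun h => by simp [h] at hM
  refine ⟨_, x, y, hM, hxy, (div_mul_cancel₀ _ (hρ_pos x y (hne hxy)).ne').symm,
    fun v w => ?_⟩
  by_cases hvw : f v = f w
  · simpa [hvw] using mul_nonneg hM.le (hρ_nonneg v w)
  · rw [← div_le_iff₀ (hρ_pos v w (hne hvw))]
    exact hmax (v, w) (mem_univ _)

theorem le_re_of_independentCouplingGenerator_le {J : S → S → ℝ} (hJ : ∀ x y, 0 ≤ J x y)
    {ρ : S → S → ℝ} (hρ_nonneg : ∀ x y, 0 ≤ ρ x y) (hρ_pos : ∀ x y, x ≠ y → 0 < ρ x y) {κ : ℝ}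
    (hcontr : ∀ x y, x ≠ y → independentCouplingGenerator J ρ x y ≤ -κ * ρ x y)
    {μ : ℂ} (hμ : μ ≠ 0) {f : S → ℂ} (hf : f ≠ 0)
    (hev : ∀ x, -(∑ y, (J x y : ℂ) * (f y - f x)) = μ * f x) : κ ≤ μ.re := by
  obtain ⟨a, b, hab⟩ := exists_ne_of_eigenfunction hμ hf hev
  obtain ⟨M, x, y, hM, hxy, hu, hLip⟩ :=
    exists_pair_maximizing_norm_sub_div hρ_nonneg hρ_pos f hab
  set u := f x - f y
  have hu_pos : 0 < ‖u‖ := norm_pos_iff.2 (sub_ne_zero.2 hxy)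
  have hμu : μ * u = ∑ z, (J x z : ℂ) * (u - (f z - f y))
      + ∑ z, (J y z : ℂ) * (u - (f x - f z)) := by
    have hx : ∑ z, (J x z : ℂ) * (u - (f z - f y)) = μ * f x := by
      rw [← hev x, ← sum_neg_distrib]
      exact sum_congr rfl fun z _ => by ring
    have hy : ∑ z, (J y z : ℂ) * (u - (f x - f z)) = -(μ * f y) := by
      rw [← hev y, neg_neg]
      exact sum_congr rfl fun z _ => by ring
    rw [hx, hy]
    ring
  have hterm : ∀ (c r : ℝ) (v : ℂ), 0 ≤ c → ‖v‖ ≤ M * r →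
      ‖u‖ * M * (c * (ρ x y - r)) ≤ ⟪u, (c : ℂ) * (u - v)⟫_ℝ := by
    intro c r v hc hv
    rw [← Complex.real_smul, real_inner_smul_right, inner_sub_right, real_inner_self_eq_norm_sq]
    have hinner : ⟪u, v⟫_ℝ ≤ ‖u‖ * (M * r) :=
      (real_inner_le_norm u v).trans (mul_le_mul_of_nonneg_left hv hu_pos.le)
    have hsq : ‖u‖ ^ 2 = ‖u‖ * (M * ρ x y) := by rw [sq, ← hu]
    nlinarith
  have hgen : ‖u‖ * M * -independentCouplingGenerator J ρ x y ≤ μ.re * ‖u‖ ^ 2 := by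
    have hre : ⟪u, μ * u⟫_ℝ = μ.re * ‖u‖ ^ 2 := by
      rw [Complex.inner, mul_assoc, Complex.mul_conj, Complex.re_mul_ofReal,
        Complex.normSq_eq_norm_sq]
    rw [← hre, hμu, inner_add_right, inner_sum, inner_sum, independentCouplingGenerator,
      neg_add, ← sum_neg_distrib, ← sum_neg_distrib, mul_add, mul_sum, mul_sum]
    refine add_le_add (sum_le_sum fun z _ => ?_) (sum_le_sum fun z _ => ?_)
    · rw [← mul_neg, neg_sub]
      exact hterm _ _ _ (hJ x z) (hLip z y)
    · rw [← mul_neg, neg_sub]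
      exact hterm _ _ _ (hJ y z) (hLip x z)
  have hκ : κ * ‖u‖ ^ 2 ≤ μ.re * ‖u‖ ^ 2 := calc
    κ * ‖u‖ ^ 2 = ‖u‖ * M * (κ * ρ x y) := by rw [sq]; nth_rw 2 [hu]; ring
    _ ≤ ‖u‖ * M * -independentCouplingGenerator J ρ x y :=
      mul_le_mul_of_nonneg_left (by linarith [hcontr x y fun h => hxy (h ▸ rfl)])
        (by positivity)
    _ ≤ μ.re * ‖u‖ ^ 2 := hgen
  exact le_of_mul_le_mul_right hκ (by positivity)

end Coupling

namespace DegreeDiameter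

noncomputable def increment (d : ℝ) (D k : ℕ) : ℝ := ((d - 1) ^ (D + 1 - k) - 1) / (d - 2)

noncomputable def profile (d : ℝ) (D n : ℕ) : ℝ := ∑ k ∈ Icc 1 n, increment d D k

variable {d : ℝ} {D : ℕ}

lemma increment_nonneg (hd : 2 < d) (k : ℕ) : 0 ≤ increment d D k := by
  have : (1 : ℝ) ≤ (d - 1) ^ (D + 1 - k) := one_le_pow₀ (by linarith)
  exact div_nonneg (by linarith) (by linarith)

lemma increment_pos (hd : 2 < d) {k : ℕ} (hk : k ≤ D) : 0 < increment d D k := by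
  have : (1 : ℝ) < (d - 1) ^ (D + 1 - k) := one_lt_pow₀ (by linarith) (by omega)
  exact div_pos (by linarith) (by linarith)

lemma sub_one_mul_increment_succ (hd : 2 < d) {n : ℕ} (hn : n ≤ D) :
    (d - 1) * increment d D (n + 1) = increment d D n - 1 := by
  have hexp : D + 1 - n = D + 1 - (n + 1) + 1 := by omega
  have hd2 : d - 2 ≠ 0 := by linarith
  rw [increment, increment, hexp, pow_succ]
  field_simp
  ring

@[simp]
lemma profile_zero : profile d D 0 = 0 := by simp [profile]

lemma profile_succ (n : ℕ) : profile d D (n + 1) = profile d D n + increment d D (n + 1) :=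
  sum_Icc_succ_top (by omega) _

lemma profile_mono (hd : 2 < d) : Monotone (profile d D) := fun _ _ hmn =>
  sum_le_sum_of_subset_of_nonneg (Icc_subset_Icc_right hmn) fun k _ _ => increment_nonneg hd k

lemma profile_nonneg (hd : 2 < d) (n : ℕ) : 0 ≤ profile d D n :=
  profile_zero (d := d) (D := D) ▸ profile_mono hd (Nat.zero_le n)

lemma profile_pos (hd : 2 < d) {n : ℕ} (hn : 1 ≤ n) (hnD : n ≤ D) : 0 < profile d D n := by
  have h1 : profile d D 1 = increment d D 1 := by simp [profile]
  exact (h1 ▸ increment_pos hd (hn.trans hnD)).trans_le (profile_mono hd hn)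

lemma profile_self :
    profile d D D = ((∑ k ∈ Icc 1 D, (d - 1) ^ k) - D) / (d - 2) := by
  have hreflect : ∑ k ∈ Icc 1 D, (d - 1) ^ (D + 1 - k) = ∑ k ∈ Icc 1 D, (d - 1) ^ k :=
    sum_nbij' (fun k => D + 1 - k) (fun k => D + 1 - k) (by intro a; simp only [mem_Icc]; omega)
      (by intro a; simp only [mem_Icc]; omega) (by intro a; simp only [mem_Icc]; omega)
      (by intro a; simp only [mem_Icc]; omega) fun _ _ => rfl
  simp only [profile, increment, sub_div]
  rw [sum_sub_distrib, ← sum_div, hreflect, sum_const, Nat.card_Icc, nsmul_eq_mul,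
    add_tsub_cancel_right, mul_one_div]

end DegreeDiameter

open DegreeDiameter

lemma SimpleGraph.Reachable.exists_adj_dist_add_one_eq {V : Type*} {G : SimpleGraph V} {u v : V}
    (h : G.Reachable u v) (huv : u ≠ v) : ∃ w, G.Adj u w ∧ G.dist w v + 1 = G.dist u v := by
  obtain ⟨p, hp⟩ := h.exists_walk_length_eq_dist
  cases p with
  | nil => exact absurd rfl huv
  | @cons _ w _ hadj q =>
    refine ⟨w, hadj, le_antisymm ?_ ?_⟩
    · have := SimpleGraph.dist_le q
      rw [SimpleGraph.Walk.length_cons] at hp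
      omega
    · have := q.reachable.dist_triangle_right u
      rw [SimpleGraph.dist_eq_one_iff_adj.2 hadj] at this
      omega

section Drift

variable {S : Type*} [Fintype S] {G : SimpleGraph S} {J : S → S → ℝ} {d : ℝ} {D : ℕ}

lemma sum_mul_profile_dist_sub_le (hJ : ∀ x y, 0 ≤ J x y) (hJadj : ∀ x y, 0 < J x y → G.Adj x y)
    (hd : 2 < d) (hdeg : ∀ x y, G.Adj x y → ∑ z, J x z ≤ d * J x y) {x y : S}
    (hreach : G.Reachable x y) (hxy : x ≠ y) (hxyD : G.dist x y ≤ D) :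
    ∑ z, J x z * (profile d D (G.dist z y) - profile d D (G.dist x y)) ≤ -((∑ z, J x z) / d) := by
  classical
  obtain ⟨z₀, hadj, hz₀⟩ := hreach.exists_adj_dist_add_one_eq hxy
  rw [← hz₀] at hxyD ⊢
  set m := G.dist z₀ y
  have hterm : ∀ z, J x z * (profile d D (G.dist z y) - profile d D (m + 1))
      ≤ J x z * increment d D (m + 2) := by
    intro z
    rcases (hJ x z).eq_or_lt with h0 | h0
    · simp [← h0]
    refine mul_le_mul_of_nonneg_left ?_ h0.le
    have hdist := (hJadj x z h0).diff_dist_adj (u := y)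
    rw [SimpleGraph.dist_comm, SimpleGraph.dist_comm (u := y), ← hz₀] at hdist
    rw [sub_le_iff_le_add', ← profile_succ]
    exact profile_mono hd (by omega)
  have hterm₀ : J x z₀ * (profile d D m - profile d D (m + 1))
      = J x z₀ * increment d D (m + 2)
        - J x z₀ * (increment d D (m + 1) + increment d D (m + 2)) := by
    rw [profile_succ]
    ring
  set δ := increment d D (m + 1)
  set δ' := increment d D (m + 2)
  have hsum : ∑ z, J x z * (profile d D (G.dist z y) - profile d D (m + 1))
      ≤ (∑ z, J x z) * δ' - J x z₀ * (δ + δ') := by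
    rw [← add_sum_erase _ _ (mem_univ z₀), sum_mul, ← add_sum_erase _ _ (mem_univ z₀), hterm₀]
    linarith [sum_le_sum fun z (_ : z ∈ univ.erase z₀) => hterm z]
  have hJ₀ : (∑ z, J x z) / d ≤ J x z₀ := by
    rw [div_le_iff₀ (by linarith)]
    linarith [hdeg x z₀ hadj]
  have hrec : (d - 1) * δ' = δ - 1 := sub_one_mul_increment_succ hd hxyD
  have hδδ' : 0 ≤ δ + δ' := add_nonneg (increment_nonneg hd _) (increment_nonneg hd _)
  calc _ ≤ (∑ z, J x z) * δ' - J x z₀ * (δ + δ') := hsum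
    _ ≤ (∑ z, J x z) * δ' - (∑ z, J x z) / d * (δ + δ') := by gcongr
    _ = -((∑ z, J x z) / d) := by
      field_simp
      linear_combination (∑ z, J x z) * hrec

lemma independentCouplingGenerator_profile_le (hconn : G.Connected) (hDub : ∀ x y, G.dist x y ≤ D)
    (hJ : ∀ x y, 0 ≤ J x y) (hJadj : ∀ x y, 0 < J x y → G.Adj x y) (hd : 2 < d)
    (hdeg : ∀ x y, G.Adj x y → ∑ z, J x z ≤ d * J x y) {lam : ℝ} (hlam : ∀ x, lam ≤ ∑ y, J x y)
    {x y : S} (hxy : x ≠ y) :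
    independentCouplingGenerator J (fun x y => profile d D (G.dist x y)) x y ≤ -(2 * lam / d) := by
  have hx := sum_mul_profile_dist_sub_le hJ hJadj hd hdeg (hconn x y) hxy (hDub x y)
  have hy := sum_mul_profile_dist_sub_le hJ hJadj hd hdeg (hconn y x) hxy.symm (hDub y x)
  simp only [SimpleGraph.dist_comm (v := x)] at hy
  have hdpos : 0 < d := by linarith
  have hlx : lam / d ≤ (∑ z, J x z) / d := div_le_div_of_nonneg_right (hlam x) hdpos.le
  have hly : lam / d ≤ (∑ z, J y z) / d := div_le_div_of_nonneg_right (hlam y) hdpos.le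
  have htwo : 2 * lam / d = lam / d + lam / d := by ring
  simp only [independentCouplingGenerator]
  linarith

end Drift

theorem stmt18_general {S : Type*} [Fintype S]
    (G : SimpleGraph S) (hconn : G.Connected)
    (D : ℕ) (hDub : ∀ x y, G.dist x y ≤ D)
    (J : S → S → ℝ) (hJnn : ∀ x y, 0 ≤ J x y)
    (hJadj : ∀ x y, 0 < J x y ↔ G.Adj x y)
    (lamstar dL : ℝ)
    (hstar : IsGLB (Set.range fun x => ∑ y, J x y) lamstar)
    (hstarpos : 0 < lamstar)
    (hdL : IsLUB {r : ℝ | ∃ x y, G.Adj x y ∧ r = (∑ z, J x z) / J x y} dL)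
    (hdL2 : 2 < dL)
    (μ : ℂ) (hμ : μ ≠ 0)
    (hev : ∃ f : S → ℂ, f ≠ 0 ∧ ∀ x, -(∑ y, (J x y : ℂ) * (f y - f x)) = μ * f x) :
    2 * lamstar * (dL - 2) / (dL * ((∑ k ∈ Finset.Icc 1 D, (dL - 1) ^ k) - D)) ≤ μ.re := by
  obtain ⟨f, hf, hfev⟩ := hev
  have hlam : ∀ x, lamstar ≤ ∑ y, J x y := fun x => hstar.1 ⟨x, rfl⟩
  have hdeg : ∀ x y, G.Adj x y → ∑ z, J x z ≤ dL * J x y := fun x y h =>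
    (div_le_iff₀ ((hJadj x y).2 h)).1 (hdL.1 ⟨x, y, h, rfl⟩)
  have hρ_pos : ∀ x y, x ≠ y → 0 < profile dL D (G.dist x y) := fun x y hxy =>
    profile_pos hdL2 (hconn.pos_dist_of_ne hxy) (hDub x y)
  have hκ : 2 * lamstar * (dL - 2) / (dL * ((∑ k ∈ Finset.Icc 1 D, (dL - 1) ^ k) - D))
      = 2 * lamstar / dL / profile dL D D := by
    rw [profile_self, div_div_eq_mul_div, div_eq_mul_inv _ (dL * _), mul_inv]
    ring
  rw [hκ]
  refine le_re_of_independentCouplingGenerator_le hJnn (fun x y => profile_nonneg hdL2 _) hρ_pos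
    (fun x y hxy => ?_) hμ hf hfev
  have hD : 0 < profile dL D D := (hρ_pos x y hxy).trans_le (profile_mono hdL2 (hDub x y))
  calc _ ≤ -(2 * lamstar / dL) :=
        independentCouplingGenerator_profile_le hconn hDub hJnn (fun x y => (hJadj x y).1) hdL2
          hdeg hlam hxy
    _ = -(2 * lamstar / dL / profile dL D D) * profile dL D D := by
      rw [neg_mul, div_mul_cancel₀ _ hD.ne']
    _ ≤ -(2 * lamstar / dL / profile dL D D) * profile dL D (G.dist x y) :=
      mul_le_mul_of_nonpos_left (profile_mono hdL2 (hDub x y)) (neg_nonpos.2 (by positivity))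

/-- Estimate of eigenvalues in terms of degree and diameter: on a finite connected
graph of diameter `D ≥ 2`, for a nearest-neighbor generator `L` with jump rates
`J`, minimal total jump rate `λ* > 0` and maximal degree
`d_L = sup_x max_{y ~ x} λ(x)/J(x,y) > 2`, every nonzero eigenvalue `μ` of `-L`
in `ℂ` satisfies `Re μ ≥ 2 λ* (d_L - 2) / (d_L (∑_{k=1}^{D} (d_L-1)^k - D))`. -/
theorem stmt18 {S : Type*} [Fintype S] [DecidableEq S] [Nonempty S]
    (G : SimpleGraph S) (hconn : G.Connected)
    (D : ℕ) (hD2 : 2 ≤ D) (hDub : ∀ x y, G.dist x y ≤ D) (hDach : ∃ x y, G.dist x y = D)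
    (J : S → S → ℝ) (hJnn : ∀ x y, 0 ≤ J x y) (hJd : ∀ x, J x x = 0)
    (hJadj : ∀ x y, 0 < J x y ↔ G.Adj x y)
    (lamstar dL : ℝ)
    (hstar : IsGLB (Set.range fun x => ∑ y, J x y) lamstar)
    (hstarpos : 0 < lamstar)
    (hdL : IsLUB {r : ℝ | ∃ x y, G.Adj x y ∧ r = (∑ z, J x z) / J x y} dL)
    (hdL2 : 2 < dL)
    (μ : ℂ) (hμ : μ ≠ 0)
    (hev : ∃ f : S → ℂ, f ≠ 0 ∧ ∀ x, -(∑ y, (J x y : ℂ) * (f y - f x)) = μ * f x) :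
    2 * lamstar * (dL - 2) / (dL * ((∑ k ∈ Finset.Icc 1 D, (dL - 1) ^ k) - D)) ≤ μ.re :=
  stmt18_general G hconn D hDub J hJnn hJadj lamstar dL hstar hstarpos hdL hdL2 μ hμ hev
end

section
/- (Lyapunov criterion for positive Ricci curvature) Assume: (1) there exist V : S → [1,∞), constants r, b > 0 and a finite set K ⊆ S with LV ≤ -rV + b·1_K and inf_{K^c} V > b/r; (2) there exist a pseudo-metric d_π on S, a coupling generator L^π of L, and C > 0 with d_π(x,y) ≤ C(V(x)+V(y)) and L^π d_π(x,y) ≤ -1_{K×K}(x,y) for all x ≠ y. Then for every β ∈ (0, 1/(2b)), setting d_β(x,y) = d_π(x,y) + β·1_{x≠y}(V(x)+V(y)), one has L^π d_β(x,y) ≤ -κ d_β(x,y) for all x ≠ y, where κ = min{ β(r·inf_{K^c}V - b)/((C+β)(sup_K V + inf_{K^c} V)), (1 - 2βb)/(2(C+β) sup_K V) } > 0. -/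
lemma summable_of_kernel {S : Type*} (Jπ : S × S → ℝ)
    (hfin : (Function.support Jπ).Finite) (F : S × S → ℝ) :
    Summable (fun w => Jπ w * F w) := by
  refine summable_of_ne_finset_zero (s := hfin.toFinset) (fun w hw => ?_)
  have : Jπ w = 0 := by
    by_contra h
    exact hw (hfin.mem_toFinset.2 h)
  simp [this]

lemma summable_fiber1 {S : Type*} (Jπ : S × S → ℝ)
    (hfin : (Function.support Jπ).Finite) (F : S × S → ℝ) (a : S) :
    Summable (fun c => Jπ (a, c) * F (a, c)) := by
  refine summable_of_ne_finset_zero (s := (hfin.image Prod.snd).toFinset) (fun c hc => ?_)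
  have : Jπ (a, c) = 0 := by
    by_contra h
    exact hc (((hfin.image Prod.snd)).mem_toFinset.2 ⟨(a,c), h, rfl⟩)
  simp [this]

lemma tsum_kernel_eq {S : Type*} (Jπ : S × S → ℝ)
    (hfin : (Function.support Jπ).Finite) (F : S × S → ℝ) :
    ∑' w : S × S, Jπ w * F w = ∑' (a : S) (c : S), Jπ (a, c) * F (a, c) :=
  Summable.tsum_prod' (summable_of_kernel _ hfin _) (fun a => summable_fiber1 _ hfin _ a)

lemma marginal_fst {S : Type*} (J : S → S → ℝ) (hJd : ∀ x, J x x = 0)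
    (Jπ : S × S → S × S → ℝ)
    (hm : ∀ x y x', x' ≠ x → ∑' y', Jπ (x, y) (x', y') = J x x')
    (hfin : ∀ z, (Function.support (Jπ z)).Finite)
    (x y : S) (g : S → ℝ) :
    ∑' w : S × S, Jπ (x, y) w * (g w.1 - g x) = ∑' x', J x x' * (g x' - g x) := by
  rw [tsum_kernel_eq _ (hfin (x,y)) (fun w => g w.1 - g x)]
  refine tsum_congr fun x' => ?_
  simp only
  rw [tsum_mul_right]
  by_cases h : x' = x
  · subst h; simp [hJd]
  · rw [hm x y x' h]

lemma marginal_snd {S : Type*} (J : S → S → ℝ) (hJd : ∀ x, J x x = 0)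
    (Jπ : S × S → S × S → ℝ)
    (hm : ∀ x y y', y' ≠ y → ∑' x', Jπ (x, y) (x', y') = J y y')
    (hfin : ∀ z, (Function.support (Jπ z)).Finite)
    (x y : S) (g : S → ℝ) :
    ∑' w : S × S, Jπ (x, y) w * (g w.2 - g y) = ∑' y', J y y' * (g y' - g y) := by
  set Q : S × S → ℝ := fun w => Jπ (x, y) (w.2, w.1) with hQ
  have hQfin : (Function.support Q).Finite := by
    have : Function.support Q ⊆ Prod.swap ⁻¹' (Function.support (Jπ (x, y))) :=
      fun w hw => hw
    exact Set.Finite.subset ((hfin (x,y)).preimage (Prod.swap_injective.injOn)) this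
  have e : ∑' w : S × S, Jπ (x, y) w * (g w.2 - g y)
      = ∑' w : S × S, Q w * (g w.1 - g y) := by
    rw [← (Equiv.prodComm S S).tsum_eq (fun w : S × S => Jπ (x, y) w * (g w.2 - g y))]
    rfl
  rw [e, tsum_kernel_eq Q hQfin (fun w => g w.1 - g y)]
  refine tsum_congr fun y' => ?_
  simp only [hQ]
  rw [tsum_mul_right]
  by_cases h : y' = y
  · subst h; simp [hJd]
  · rw [hm x y y' h]

set_option maxHeartbeats 1000000 in
/-- Lyapunov criterion for positive Ricci curvature: assume
(1) `LV ≤ -rV + b 1_K` with `V ≥ 1`, `K` finite and `inf_{K^c} V > b/r`;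
(2) a pseudo-metric `d_π ≤ C(V ⊕ V)` and a coupling generator `L^π` with
`L^π d_π ≤ -1_{K×K}` off the diagonal. Then for every `β ∈ (0, 1/(2b))`, the
cost `d_β(x,y) = d_π(x,y) + β 1_{x≠y}(V x + V y)` satisfies
`L^π d_β ≤ -κ d_β` with the explicit positive constant
`κ = min{β(r inf_{K^c}V - b)/((C+β)(sup_K V + inf_{K^c}V)),
(1-2βb)/(2(C+β) sup_K V)}`. -/
theorem stmt19 {S : Type*} [DecidableEq S]
    (J : S → S → ℝ) (hJnn : ∀ x y, 0 ≤ J x y) (hJd : ∀ x, J x x = 0)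
    (hJfin : ∀ x, (Function.support (J x)).Finite)
    (V : S → ℝ) (hV1 : ∀ x, 1 ≤ V x)
    (r b C : ℝ) (hr : 0 < r) (hb : 0 < b) (hC : 0 < C)
    (K : Set S) (hKfin : K.Finite) (hKne : K.Nonempty)
    (hLyap : ∀ x, ∑' y, J x y * (V y - V x) ≤
      -r * V x + b * K.indicator (fun _ => (1 : ℝ)) x)
    (Vinf Vsup : ℝ) (hVinf : IsGLB (V '' Kᶜ) Vinf) (hVsup : IsLUB (V '' K) Vsup)
    (hgap : b / r < Vinf)
    (dπ : S → S → ℝ) (hd0 : ∀ x, dπ x x = 0) (hdsym : ∀ x y, dπ x y = dπ y x)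
    (hdnn : ∀ x y, 0 ≤ dπ x y) (hdtri : ∀ x y z, dπ x z ≤ dπ x y + dπ y z)
    (hdC : ∀ x y, dπ x y ≤ C * (V x + V y))
    (Jπ : S × S → S × S → ℝ) (hJπ : IsCouplingKernel J Jπ)
    (hJπfin : ∀ z, (Function.support (Jπ z)).Finite)
    (hcontr : ∀ x y, x ≠ y →
      ∑' w : S × S, Jπ (x, y) w * (dπ w.1 w.2 - dπ x y) ≤
        -(K ×ˢ K).indicator (fun _ => (1 : ℝ)) (x, y)) :
    ∀ β : ℝ, 0 < β → β < 1 / (2 * b) →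
      let dβ : S → S → ℝ := fun x y => dπ x y + if x = y then 0 else β * (V x + V y)
      let κ : ℝ := min (β * (r * Vinf - b) / ((C + β) * (Vsup + Vinf)))
        ((1 - 2 * β * b) / (2 * (C + β) * Vsup))
      0 < κ ∧ ∀ x y, x ≠ y →
        ∑' w : S × S, Jπ (x, y) w * (dβ w.1 w.2 - dβ x y) ≤ -κ * dβ x y := by
  intro β hβ hβb
  intro dβ κ
  -- basic constants
  obtain ⟨k0, hk0⟩ := hKne
  have hVsup1 : (1 : ℝ) ≤ Vsup := le_trans (hV1 k0) (hVsup.1 ⟨k0, hk0, rfl⟩)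
  have hVinfpos : 0 < Vinf := lt_trans (div_pos hb hr) hgap
  have hrVinf : b < r * Vinf := by
    have := (div_lt_iff₀ hr).1 hgap
    linarith
  have hCβ : 0 < C + β := by linarith
  have h2βb : 2 * β * b < 1 := by
    have := (lt_div_iff₀ (by positivity : (0:ℝ) < 2 * b)).1 hβb
    linarith
  set κ1 : ℝ := β * (r * Vinf - b) / ((C + β) * (Vsup + Vinf)) with hκ1def
  set κ2 : ℝ := (1 - 2 * β * b) / (2 * (C + β) * Vsup) with hκ2def
  have hden1 : 0 < (C + β) * (Vsup + Vinf) := by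
    apply mul_pos hCβ; linarith
  have hden2 : 0 < 2 * (C + β) * Vsup := by
    apply mul_pos (by linarith); linarith
  have hκ1pos : 0 < κ1 := div_pos (mul_pos hβ (by linarith)) hden1
  have hκ2pos : 0 < κ2 := div_pos (by linarith) hden2
  have hκeq : κ = min κ1 κ2 := rfl
  have hκpos : 0 < κ := by rw [hκeq]; exact lt_min hκ1pos hκ2pos
  have hcancel1 : κ1 * ((C + β) * (Vsup + Vinf)) = β * (r * Vinf - b) :=
    div_mul_cancel₀ _ (ne_of_gt hden1)
  have hcancel2 : κ2 * (2 * (C + β) * Vsup) = 1 - 2 * β * b :=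
    div_mul_cancel₀ _ (ne_of_gt hden2)
  refine ⟨hκpos, fun x y hxy => ?_⟩
  have hdβxy : dβ x y = dπ x y + β * (V x + V y) := by simp [dβ, hxy]
  have hdβnn : 0 ≤ dβ x y := by
    rw [hdβxy]
    have := hdnn x y
    nlinarith [hV1 x, hV1 y]
  have hdβC : dβ x y ≤ (C + β) * (V x + V y) := by
    rw [hdβxy]
    have := hdC x y
    nlinarith [hV1 x, hV1 y]
  -- summabilities
  have s1 := summable_of_kernel (Jπ (x,y)) (hJπfin (x,y)) (fun w => dπ w.1 w.2 - dπ x y)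
  have s2 := summable_of_kernel (Jπ (x,y)) (hJπfin (x,y)) (fun w => V w.1 - V x)
  have s3 := summable_of_kernel (Jπ (x,y)) (hJπfin (x,y)) (fun w => V w.2 - V y)
  -- step A: termwise bound
  have hA : ∑' w : S × S, Jπ (x, y) w * (dβ w.1 w.2 - dβ x y)
      ≤ ∑' w : S × S, (Jπ (x, y) w * (dπ w.1 w.2 - dπ x y)
          + (β * (Jπ (x, y) w * (V w.1 - V x)) + β * (Jπ (x, y) w * (V w.2 - V y)))) := by
    refine Summable.tsum_le_tsum (fun w => ?_)
      (summable_of_kernel (Jπ (x,y)) (hJπfin (x,y)) (fun w => dβ w.1 w.2 - dβ x y))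
      (s1.add ((s2.mul_left β).add (s3.mul_left β)))
    have h1 : dβ w.1 w.2 ≤ dπ w.1 w.2 + β * (V w.1 + V w.2) := by
      by_cases h : w.1 = w.2
      · rw [show dβ w.1 w.2 = dπ w.1 w.2 by simp [dβ, h]]
        nlinarith [hV1 w.1, hV1 w.2]
      · simp [dβ, h]
    have h2 : dβ w.1 w.2 - dβ x y
        ≤ (dπ w.1 w.2 - dπ x y) + (V w.1 - V x) * β + (V w.2 - V y) * β := by
      rw [hdβxy]; nlinarith [h1]
    have h3 := mul_le_mul_of_nonneg_left h2 (hJπ.1 (x, y) w)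
    linarith [h3]
  -- step B: split the right-hand tsum
  have hB : ∑' w : S × S, (Jπ (x, y) w * (dπ w.1 w.2 - dπ x y)
          + (β * (Jπ (x, y) w * (V w.1 - V x)) + β * (Jπ (x, y) w * (V w.2 - V y))))
      = (∑' w : S × S, Jπ (x, y) w * (dπ w.1 w.2 - dπ x y))
        + (β * ∑' w : S × S, Jπ (x, y) w * (V w.1 - V x)
          + β * ∑' w : S × S, Jπ (x, y) w * (V w.2 - V y)) := by
    rw [Summable.tsum_add s1 ((s2.mul_left β).add (s3.mul_left β)),
      Summable.tsum_add (s2.mul_left β) (s3.mul_left β), tsum_mul_left, tsum_mul_left]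
  -- step C: marginals and Lyapunov
  have hm1 : ∑' w : S × S, Jπ (x, y) w * (V w.1 - V x)
      ≤ -r * V x + b * K.indicator (fun _ => (1 : ℝ)) x := by
    rw [marginal_fst J hJd Jπ hJπ.2.1 hJπfin x y V]
    exact hLyap x
  have hm2 : ∑' w : S × S, Jπ (x, y) w * (V w.2 - V y)
      ≤ -r * V y + b * K.indicator (fun _ => (1 : ℝ)) y := by
    rw [marginal_snd J hJd Jπ hJπ.2.2.1 hJπfin x y V]
    exact hLyap y
  have hc := hcontr x y hxy
  have main : ∑' w : S × S, Jπ (x, y) w * (dβ w.1 w.2 - dβ x y)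
      ≤ -(K ×ˢ K).indicator (fun _ => (1 : ℝ)) (x, y)
        + β * (-r * V x + b * K.indicator (fun _ => (1 : ℝ)) x)
        + β * (-r * V y + b * K.indicator (fun _ => (1 : ℝ)) y) := by
    rw [hB] at hA
    have h4 := mul_le_mul_of_nonneg_left hm1 hβ.le
    have h5 := mul_le_mul_of_nonneg_left hm2 hβ.le
    linarith
  by_cases hK2 : x ∈ K ∧ y ∈ K
  · -- both in K
    have hI : (K ×ˢ K).indicator (fun _ => (1 : ℝ)) (x, y) = 1 :=
      Set.indicator_of_mem (Set.mk_mem_prod hK2.1 hK2.2) _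
    have hix : K.indicator (fun _ => (1 : ℝ)) x = 1 := Set.indicator_of_mem hK2.1 _
    have hiy : K.indicator (fun _ => (1 : ℝ)) y = 1 := Set.indicator_of_mem hK2.2 _
    rw [hI, hix, hiy] at main
    have hVx : V x ≤ Vsup := hVsup.1 ⟨x, hK2.1, rfl⟩
    have hVy : V y ≤ Vsup := hVsup.1 ⟨y, hK2.2, rfl⟩
    have hdβ2 : dβ x y ≤ 2 * (C + β) * Vsup := by nlinarith [hdβC]
    have h7 : κ2 * dβ x y ≤ κ2 * (2 * (C + β) * Vsup) :=
      mul_le_mul_of_nonneg_left hdβ2 hκ2pos.le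
    have h8 : κ * dβ x y ≤ κ2 * dβ x y := by
      have : κ ≤ κ2 := by rw [hκeq]; exact min_le_right _ _
      exact mul_le_mul_of_nonneg_right this hdβnn
    have hE : -1 + β * (-r * V x + b) + β * (-r * V y + b) ≤ -(κ * dβ x y) := by
      have e1 : κ * dβ x y ≤ 1 - 2 * β * b := by linarith [h7, h8, hcancel2]
      nlinarith [e1, mul_nonneg (mul_nonneg hβ.le hr.le)
        (by linarith [hV1 x, hV1 y] : (0:ℝ) ≤ V x + V y)]
    linarith [main, hE]
  · -- not both in K
    have hI : (K ×ˢ K).indicator (fun _ => (1 : ℝ)) (x, y) = 0 :=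
      Set.indicator_of_notMem (by
        intro h
        exact hK2 ⟨h.1, h.2⟩) _
    have hind : K.indicator (fun _ => (1 : ℝ)) x + K.indicator (fun _ => (1 : ℝ)) y ≤ 1
        ∧ Vinf + 1 ≤ V x + V y := by
      by_cases hx : x ∈ K
      · have hy : y ∉ K := fun hy => hK2 ⟨hx, hy⟩
        refine ⟨?_, ?_⟩
        · rw [Set.indicator_of_mem hx, Set.indicator_of_notMem hy]; norm_num
        · have := hVinf.1 ⟨y, hy, rfl⟩
          linarith [hV1 x]
      · refine ⟨?_, ?_⟩
        · rw [Set.indicator_of_notMem hx]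
          by_cases hy : y ∈ K
          · rw [Set.indicator_of_mem hy]; norm_num
          · rw [Set.indicator_of_notMem hy]; norm_num
        · have := hVinf.1 ⟨x, hx, rfl⟩
          linarith [hV1 y]
    obtain ⟨hind1, hs⟩ := hind
    have key : (r * Vinf - b) * (V x + V y) ≤ (r * (V x + V y) - b) * (Vsup + Vinf) := by
      nlinarith [mul_nonneg (by linarith : (0:ℝ) ≤ (V x + V y) - (Vinf + 1))
          (by nlinarith : (0:ℝ) ≤ r * Vsup + b),
        mul_nonneg (by linarith : (0:ℝ) ≤ Vsup) (by linarith : (0:ℝ) ≤ r * Vinf - b)]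
    have h5 : κ1 * ((C + β) * (V x + V y)) * (Vsup + Vinf)
        ≤ (β * (r * (V x + V y) - b)) * (Vsup + Vinf) := by
      have hkey2 := mul_le_mul_of_nonneg_left key hβ.le
      calc κ1 * ((C + β) * (V x + V y)) * (Vsup + Vinf)
          = (κ1 * ((C + β) * (Vsup + Vinf))) * (V x + V y) := by ring
        _ = (β * (r * Vinf - b)) * (V x + V y) := by rw [hcancel1]
        _ = β * ((r * Vinf - b) * (V x + V y)) := by ring
        _ ≤ β * ((r * (V x + V y) - b) * (Vsup + Vinf)) := hkey2
        _ = (β * (r * (V x + V y) - b)) * (Vsup + Vinf) := by ring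
    have h6 : κ1 * ((C + β) * (V x + V y)) ≤ β * (r * (V x + V y) - b) :=
      le_of_mul_le_mul_right h5 (by linarith : (0:ℝ) < Vsup + Vinf)
    have h7 : κ1 * dβ x y ≤ κ1 * ((C + β) * (V x + V y)) :=
      mul_le_mul_of_nonneg_left hdβC hκ1pos.le
    have h8 : κ * dβ x y ≤ κ1 * dβ x y := by
      have : κ ≤ κ1 := by rw [hκeq]; exact min_le_left _ _
      exact mul_le_mul_of_nonneg_right this hdβnn
    have hind2 : β * (b * K.indicator (fun _ => (1 : ℝ)) x)
        + β * (b * K.indicator (fun _ => (1 : ℝ)) y) ≤ β * b := by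
      nlinarith [mul_le_mul_of_nonneg_left hind1 (mul_nonneg hβ.le hb.le)]
    rw [hI] at main
    have hE : β * (-r * V x + b * K.indicator (fun _ => (1 : ℝ)) x)
        + β * (-r * V y + b * K.indicator (fun _ => (1 : ℝ)) y)
        ≤ β * (b - r * (V x + V y)) := by
      nlinarith [hind2]
    linarith [main, hE, h6, h7, h8]
end
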